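/- arXiv:2605.07869 — 8 statements merged into one kernel-verified Lean document; each statement's English description precedes it below -/
import Mathlib

section
/- Let p be an odd prime and let j ≤ k be positive integers with 2j ≥ k. Then for every Dirichlet character χ modulo p^k there is a unique residue ℓ_χ ∈ ℤ/p^{k−j}ℤ such that χ(1 + p^j x) = e_{p^{k−j}}(ℓ_χ x) for all integers x, and the map χ ↦ ℓ_χ is a surjective group homomorphism from the group of Dirichlet characters modulo p^k onto the additive group ℤ/p^{k−j}ℤ. -/
open Complex

/-- `eN q x = e^{2πix/q}`. -/
noncomputable def eN (q : ℕ) (x : ℤ) : ℂ := Complex.exp (2 * Real.pi * Complex.I * x / q)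

/-!
Write `n = p^k = d N` with `d = p^j` and `N = p^(k-j)`; then `N ∣ d`, so `n ∣ d²` and
`(1 + d x)(1 + d y) ≡ 1 + d (x + y) (mod n)`. Hence `x ↦ 1 + d x` embeds `ℤ/N` into `(ℤ/n)ˣ`
as a subgroup, and restricting a Dirichlet character `χ` to it gives an additive character of
`ℤ/N`, which is `x ↦ e_N(ℓ x)` for a unique `ℓ = ℓ_χ`. Restriction is a homomorphism, and it is
onto because characters of a finite abelian group extend from any subgroup.
-/

open Function

namespace ZMod

variable {d N n : ℕ}

def mulLeftHom (d : ℕ) (hdN : d * N = n) : ZMod N →+ ZMod n :=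
  ZMod.lift N ⟨(AddMonoidHom.mulLeft (d : ZMod n)).comp (Int.castAddHom (ZMod n)), by
    simp [← Nat.cast_mul, hdN]⟩

@[simp]
lemma mulLeftHom_intCast (hdN : d * N = n) (x : ℤ) : mulLeftHom d hdN x = d * x :=
  ZMod.lift_coe ..

lemma mulLeftHom_injective [NeZero d] (hdN : d * N = n) : Injective (mulLeftHom d hdN) := by
  refine (injective_iff_map_eq_zero _).mpr fun x hx => ?_
  obtain ⟨x, rfl⟩ := intCast_surjective x
  rw [mulLeftHom_intCast, ← Int.cast_natCast, ← Int.cast_mul, intCast_zmod_eq_zero_iff_dvd,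
    ← hdN, Nat.cast_mul] at hx
  exact (intCast_zmod_eq_zero_iff_dvd x N).mpr
    (Int.dvd_of_mul_dvd_mul_left (by exact_mod_cast NeZero.ne d) hx)

lemma mulLeftHom_mul_mulLeftHom (hdN : d * N = n) (hNd : N ∣ d) (x y : ZMod N) :
    mulLeftHom d hdN x * mulLeftHom d hdN y = 0 := by
  obtain ⟨x, rfl⟩ := intCast_surjective x
  obtain ⟨y, rfl⟩ := intCast_surjective y
  have hdd : (d : ZMod n) * d = 0 := by
    rw [← Nat.cast_mul, natCast_eq_zero_iff, ← hdN]
    exact Nat.mul_dvd_mul_left d hNd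
  simp only [mulLeftHom_intCast]
  linear_combination (x * y : ZMod n) * hdd

def oneAddMulUnitsHom (hdN : d * N = n) (hNd : N ∣ d) :
    Multiplicative (ZMod N) →* (ZMod n)ˣ where
  toFun x :=
    { val := 1 + mulLeftHom d hdN x.toAdd
      inv := 1 - mulLeftHom d hdN x.toAdd
      val_inv := by linear_combination -mulLeftHom_mul_mulLeftHom hdN hNd x.toAdd x.toAdd
      inv_val := by linear_combination -mulLeftHom_mul_mulLeftHom hdN hNd x.toAdd x.toAdd }
  map_one' := Units.ext (by simp)
  map_mul' x y := Units.ext <| by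
    simp only [toAdd_mul, map_add, Units.val_mul]
    linear_combination -mulLeftHom_mul_mulLeftHom hdN hNd x.toAdd y.toAdd

lemma oneAddMulUnitsHom_ofAdd_intCast (hdN : d * N = n) (hNd : N ∣ d) (x : ℤ) :
    (oneAddMulUnitsHom hdN hNd (.ofAdd x) : ZMod n) = 1 + d * x := by
  simp [oneAddMulUnitsHom]

lemma oneAddMulUnitsHom_injective [NeZero d] (hdN : d * N = n) (hNd : N ∣ d) :
    Injective (oneAddMulUnitsHom hdN hNd) := fun x y hxy =>
  Multiplicative.toAdd.injective <| mulLeftHom_injective hdN <| by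
    simpa [oneAddMulUnitsHom] using congrArg Units.val hxy

end ZMod

theorem MonoidHom.exists_comp_eq_of_injective {G H M : Type*} [CommGroup G] [Finite G] [Group H]
    [CommMonoid M] [HasEnoughRootsOfUnity M (Monoid.exponent G)] {f : H →* G} (hf : Injective f)
    (φ : H →* Mˣ) : ∃ η : G →* Mˣ, η.comp f = φ := by
  obtain ⟨η, hη⟩ := MonoidHom.domRestrict_surjective M f.range
    (φ.comp (MonoidHom.ofInjective hf).symm.toMonoidHom)
  refine ⟨η, MonoidHom.ext fun h => ?_⟩
  simpa [MonoidHom.ofInjective_apply] using DFunLike.congr_fun hη (MonoidHom.ofInjective hf h)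

namespace MulChar

variable {M R A : Type*} [CommMonoid M] [CommMonoidWithZero R] [AddCommGroup A]

def restrictAddChar (f : Multiplicative A →* Mˣ) : MulChar M R →* AddChar A R where
  toFun χ :=
    { toFun a := χ (f (.ofAdd a))
      map_zero_eq_one' := by simp
      map_add_eq_mul' a b := by simp [ofAdd_add] }
  map_one' := AddChar.ext _ _ fun a => one_apply_coe _
  map_mul' χ ψ := AddChar.ext _ _ fun a => mul_apply ..

@[simp]
lemma restrictAddChar_apply (f : Multiplicative A →* Mˣ) (χ : MulChar M R) (a : A) :
    restrictAddChar f χ a = χ (f (.ofAdd a)) := rfl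

lemma restrictAddChar_surjective [Finite M]
    [HasEnoughRootsOfUnity R (Monoid.exponent Mˣ)] {f : Multiplicative A →* Mˣ}
    (hf : Injective f) : Surjective (restrictAddChar (R := R) f) := by
  intro ψ
  obtain ⟨η, hη⟩ := MonoidHom.exists_comp_eq_of_injective hf ψ.toMonoidHom.toHomUnits
  refine ⟨ofUnitHom η, AddChar.ext _ _ fun a => ?_⟩
  rw [restrictAddChar_apply, ofUnitHom_coe, ← MonoidHom.comp_apply, hη,
    MonoidHom.coe_toHomUnits, AddChar.toMonoidHom_apply, toAdd_ofAdd]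

end MulChar

lemma eN_val_mul_eq_zmodAddEquiv {N : ℕ} [NeZero N] (ℓ : ZMod N) (x : ℤ) :
    eN N (ℓ.val * x) = AddChar.zmodAddEquiv ℓ x := by
  have h : AddChar.zmodAddEquiv ℓ x = (AddChar.zmod N (ℓ.val : ℤ) x : ℂ) := by
    rw [Int.cast_natCast, ZMod.natCast_zmod_val]; rfl
  rw [h, AddChar.zmod_intCast, Circle.coe_exp, eN]
  congr 1
  push_cast
  ring

namespace DirichletCharacter

variable {d N n : ℕ} [NeZero N] (hdN : d * N = n) (hNd : N ∣ d)

noncomputable def oneAddMulIndex (χ : DirichletCharacter ℂ n) : ZMod N :=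
  AddChar.zmodAddEquiv.symm (MulChar.restrictAddChar (ZMod.oneAddMulUnitsHom hdN hNd) χ)

lemma oneAddMulIndex_spec (χ : DirichletCharacter ℂ n) (ℓ : ZMod N) :
    (∀ x : ℤ, χ (1 + d * x) = eN N (ℓ.val * x)) ↔ ℓ = oneAddMulIndex hdN hNd χ := by
  rw [oneAddMulIndex, AddEquiv.eq_symm_apply, AddChar.ext_iff, ZMod.intCast_surjective.forall]
  refine forall_congr' fun x => ?_
  rw [eN_val_mul_eq_zmodAddEquiv, MulChar.restrictAddChar_apply,
    ZMod.oneAddMulUnitsHom_ofAdd_intCast, eq_comm]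

lemma apply_one_add_mul (χ : DirichletCharacter ℂ n) (x : ℤ) :
    χ (1 + d * x) = eN N ((oneAddMulIndex hdN hNd χ).val * x) :=
  (oneAddMulIndex_spec hdN hNd χ _).mpr rfl x

lemma oneAddMulIndex_mul (χ₁ χ₂ : DirichletCharacter ℂ n) :
    oneAddMulIndex hdN hNd (χ₁ * χ₂) =
      oneAddMulIndex hdN hNd χ₁ + oneAddMulIndex hdN hNd χ₂ := by
  rw [oneAddMulIndex, map_mul]
  exact map_add AddChar.zmodAddEquiv.symm _ _

lemma oneAddMulIndex_surjective [NeZero d] : Surjective (oneAddMulIndex hdN hNd) := by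
  have : NeZero n := ⟨hdN ▸ mul_ne_zero (NeZero.ne d) (NeZero.ne N)⟩
  exact AddChar.zmodAddEquiv.symm.surjective.comp
    (MulChar.restrictAddChar_surjective (ZMod.oneAddMulUnitsHom_injective hdN hNd))

end DirichletCharacter

theorem postnikov_hom_general (p j k : ℕ) (hp : p.Prime)
    (hjk : j ≤ k) (h2j : k ≤ 2 * j) :
    ∃ L : DirichletCharacter ℂ (p ^ k) → ZMod (p ^ (k - j)),
      (∀ χ : DirichletCharacter ℂ (p ^ k), ∀ x : ℤ,
        χ ((1 + p ^ j * x : ℤ) : ZMod (p ^ k)) = eN (p ^ (k - j)) ((L χ).val * x)) ∧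
      (∀ (χ : DirichletCharacter ℂ (p ^ k)) (ℓ : ZMod (p ^ (k - j))),
        (∀ x : ℤ, χ ((1 + p ^ j * x : ℤ) : ZMod (p ^ k)) = eN (p ^ (k - j)) ((ℓ.val : ℤ) * x))
          → ℓ = L χ) ∧
      (∀ χ₁ χ₂ : DirichletCharacter ℂ (p ^ k), L (χ₁ * χ₂) = L χ₁ + L χ₂) ∧
      Function.Surjective L := by
  have : NeZero p := ⟨hp.ne_zero⟩
  have hdN : p ^ j * p ^ (k - j) = p ^ k := by rw [← pow_add, Nat.add_sub_cancel' hjk]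
  have hNd : p ^ (k - j) ∣ p ^ j := pow_dvd_pow p (by omega)
  have hcast (x : ℤ) :
      ((1 + p ^ j * x : ℤ) : ZMod (p ^ k)) = 1 + ((p ^ j : ℕ) : ZMod (p ^ k)) * x := by
    push_cast; rfl
  refine ⟨DirichletCharacter.oneAddMulIndex hdN hNd, fun χ x => ?_, fun χ ℓ hℓ => ?_,
    DirichletCharacter.oneAddMulIndex_mul hdN hNd,
    DirichletCharacter.oneAddMulIndex_surjective hdN hNd⟩
  · rw [hcast, DirichletCharacter.apply_one_add_mul hdN hNd]
  · exact (DirichletCharacter.oneAddMulIndex_spec hdN hNd χ ℓ).mp fun x => hcast x ▸ hℓ x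

/-- Postnikov: the map `χ ↦ ℓ_χ` is a well-defined surjective homomorphism onto
`ℤ/p^{k-j}ℤ`. -/
theorem postnikov_hom (p j k : ℕ) (hp : p.Prime) (hodd : Odd p) (hj : 0 < j)
    (hjk : j ≤ k) (h2j : k ≤ 2 * j) :
    ∃ L : DirichletCharacter ℂ (p ^ k) → ZMod (p ^ (k - j)),
      (∀ χ : DirichletCharacter ℂ (p ^ k), ∀ x : ℤ,
        χ ((1 + p ^ j * x : ℤ) : ZMod (p ^ k)) = eN (p ^ (k - j)) ((L χ).val * x)) ∧
      (∀ (χ : DirichletCharacter ℂ (p ^ k)) (ℓ : ZMod (p ^ (k - j))),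
        (∀ x : ℤ, χ ((1 + p ^ j * x : ℤ) : ZMod (p ^ k)) = eN (p ^ (k - j)) ((ℓ.val : ℤ) * x))
          → ℓ = L χ) ∧
      (∀ χ₁ χ₂ : DirichletCharacter ℂ (p ^ k), L (χ₁ * χ₂) = L χ₁ + L χ₂) ∧
      Function.Surjective L :=
  postnikov_hom_general p j k hp hjk h2j
end

section
/- Let p be an odd prime, let j ≤ k be positive integers with 2j ≥ k, and let χ₁, χ₂ be Dirichlet characters modulo p^k. For i = 1, 2 let ℓ_i be an integer such that χ_i(1 + p^j x) = e_{p^{k−j}}(ℓ_i x) for all integers x. Then for every integer j' with j ≤ j' ≤ k, the conductor of the character χ₁·χ₂⁻¹ (the product of χ₁ with the complex conjugate of χ₂, a character modulo p^k) divides p^{j'} if and only if ℓ₁ ≡ ℓ₂ (mod p^{k−j'}). -/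
/-!
The conductor of `χ = χ₁ χ₂⁻¹` divides `p^{j'}` iff `χ` is trivial on the kernel of
`(ℤ/p^k)ˣ → (ℤ/p^{j'})ˣ`, i.e. on the classes `1 + p^{j'} y`. For `j' ≥ j` these are
`1 + p^j (p^{j'-j} y)`, on which `χ` takes the value `e_{p^{k-j'}}((ℓ₁ - ℓ₂) y)`; this is `1` for
every `y` iff `p^{k-j'} ∣ ℓ₁ - ℓ₂`. These values are nonzero, so every such class is a unit.
-/

open Complex

lemma eN_ne_zero (q : ℕ) (x : ℤ) : eN q x ≠ 0 := Complex.exp_ne_zero _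

lemma eN_sub (q : ℕ) (x y : ℤ) : eN q (x - y) = eN q x / eN q y := by
  rw [eN, eN, eN, ← Complex.exp_sub]
  push_cast
  congr 1
  ring

lemma eN_mul_mul_left {m n : ℕ} (hn : n ≠ 0) (x : ℤ) : eN (m * n) (n * x) = eN m x := by
  have hn' : (n : ℂ) ≠ 0 := Nat.cast_ne_zero.mpr hn
  rw [eN, eN]
  push_cast
  congr 1
  field_simp

lemma eN_eq_one_iff {q : ℕ} (hq : q ≠ 0) (x : ℤ) : eN q x = 1 ↔ (q : ℤ) ∣ x := by
  have hq' : (q : ℂ) ≠ 0 := Nat.cast_ne_zero.mpr hq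
  rw [eN, Complex.exp_eq_one_iff]
  constructor
  · rintro ⟨n, hn⟩
    refine ⟨n, ?_⟩
    have hx : (x : ℂ) = q * n := by
      apply mul_left_cancel₀ Complex.two_pi_I_ne_zero
      field_simp at hn
      linear_combination (2 * (Real.pi : ℂ) * Complex.I) * hn
    exact_mod_cast hx
  · rintro ⟨m, rfl⟩
    refine ⟨m, ?_⟩
    push_cast
    field_simp

lemma forall_eN_mul_eq_one_iff {q : ℕ} (hq : q ≠ 0) (a : ℤ) :
    (∀ y : ℤ, eN q (a * y) = 1) ↔ (q : ℤ) ∣ a := by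
  simp_rw [eN_eq_one_iff hq]
  exact ⟨fun h ↦ by simpa using h 1, fun h y ↦ h.mul_right y⟩

lemma ZMod.castHom_eq_one_iff {N d : ℕ} (hd : d ∣ N) (a : ZMod N) :
    ZMod.castHom hd (ZMod d) a = 1 ↔ ∃ y : ℤ, a = ((1 + d * y : ℤ) : ZMod N) := by
  obtain ⟨z, rfl⟩ := ZMod.intCast_surjective a
  rw [map_intCast, ← Int.cast_one, ZMod.intCast_eq_intCast_iff_dvd_sub]
  constructor
  · rintro ⟨y, hy⟩
    exact ⟨-y, congrArg _ (by linarith)⟩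
  · rintro ⟨y, hy⟩
    have hN : (N : ℤ) ∣ 1 + d * y - z := (ZMod.intCast_eq_intCast_iff_dvd_sub _ _ _).mp hy
    have := dvd_sub ((Int.natCast_dvd_natCast.mpr hd).trans hN) (dvd_mul_right (d : ℤ) y)
    rwa [add_sub_right_comm, add_sub_cancel_right] at this

namespace DirichletCharacter

variable {R : Type*} [CommMonoidWithZero R] {N d : ℕ} [NeZero N]

lemma factorsThrough_iff_forall_one_add_mul (χ : DirichletCharacter R N) (hd : d ∣ N) :
    χ.FactorsThrough d ↔
      ∀ y : ℤ, IsUnit ((1 + d * y : ℤ) : ZMod N) → χ ((1 + d * y : ℤ) : ZMod N) = 1 := by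
  rw [factorsThrough_iff_ker_unitsMap hd]
  constructor
  · intro h y hy
    have hu : hy.unit ∈ (ZMod.unitsMap hd).ker := by
      rw [MonoidHom.mem_ker, ← Units.val_inj, ZMod.unitsMap_def, Units.coe_map]
      exact (ZMod.castHom_eq_one_iff hd _).mpr ⟨y, rfl⟩
    rw [← hy.unit_spec, ← MulChar.coe_toUnitHom, h hu, Units.val_one]
  · intro h u hu
    rw [MonoidHom.mem_ker, ← Units.val_inj, ZMod.unitsMap_def, Units.coe_map] at hu
    obtain ⟨y, hy⟩ := (ZMod.castHom_eq_one_iff hd _).mp hu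
    rw [MonoidHom.mem_ker, ← Units.val_inj, MulChar.coe_toUnitHom, Units.val_one, hy]
    exact h y (hy ▸ u.isUnit)

end DirichletCharacter

theorem conductor_dvd_iff_postnikov_congruence_general (p j k : ℕ) (hp : p.Prime)
    (χ₁ χ₂ : DirichletCharacter ℂ (p ^ k)) (ℓ₁ ℓ₂ : ℤ)
    (h₁ : ∀ x : ℤ, χ₁ ((1 + p ^ j * x : ℤ) : ZMod (p ^ k)) = eN (p ^ (k - j)) (ℓ₁ * x))
    (h₂ : ∀ x : ℤ, χ₂ ((1 + p ^ j * x : ℤ) : ZMod (p ^ k)) = eN (p ^ (k - j)) (ℓ₂ * x)) :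
    ∀ j' : ℕ, j ≤ j' → j' ≤ k →
      (DirichletCharacter.conductor (χ₁ * χ₂⁻¹) ∣ p ^ j' ↔
        ℓ₁ ≡ ℓ₂ [ZMOD (p ^ (k - j') : ℕ)]) := by
  intro j' hjj' hj'k
  have : NeZero (p ^ k) := ⟨pow_ne_zero _ hp.ne_zero⟩
  have hdvd : p ^ j' ∣ p ^ k := pow_dvd_pow p hj'k
  have hval (y : ℤ) : (χ₁ * χ₂⁻¹) ((1 + (p ^ j' : ℕ) * y : ℤ) : ZMod (p ^ k)) =
      eN (p ^ (k - j')) ((ℓ₁ - ℓ₂) * y) := by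
    have hlift : (1 + (p ^ j' : ℕ) * y : ℤ) = 1 + p ^ j * ((p ^ (j' - j) : ℕ) * y) := by
      push_cast
      rw [← mul_assoc, ← pow_add, Nat.add_sub_cancel' hjj']
    have hsplit : p ^ (k - j) = p ^ (k - j') * p ^ (j' - j) := by
      rw [← pow_add]
      congr 1
      omega
    rw [hlift, MulChar.coeToFun_mul, Pi.mul_apply, MulChar.inv_apply_eq_inv', h₁, h₂,
      ← div_eq_mul_inv, ← eN_sub, hsplit, ← sub_mul, mul_left_comm,
      eN_mul_mul_left (pow_ne_zero _ hp.ne_zero)]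
  have hunit (y : ℤ) : IsUnit ((1 + (p ^ j' : ℕ) * y : ℤ) : ZMod (p ^ k)) := by
    by_contra h
    exact eN_ne_zero _ _ (hval y ▸ MulChar.map_nonunit _ h)
  rw [← DirichletCharacter.mem_conductorSet_iff_conductor_dvd _ hdvd,
    DirichletCharacter.mem_conductorSet_iff,
    DirichletCharacter.factorsThrough_iff_forall_one_add_mul _ hdvd, Int.modEq_comm,
    Int.modEq_iff_dvd, ← forall_eN_mul_eq_one_iff (pow_ne_zero _ hp.ne_zero)]
  simp only [hval]
  exact forall_congr' fun y ↦ ⟨fun h ↦ h (hunit y), fun h _ ↦ h⟩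

/-- Postnikov: the conductor of `χ₁ χ₂⁻¹` divides `p^{j'}` iff `ℓ₁ ≡ ℓ₂ (mod p^{k-j'})`. -/
theorem conductor_dvd_iff_postnikov_congruence (p j k : ℕ) (hp : p.Prime) (hodd : Odd p)
    (hj : 0 < j) (hjk : j ≤ k) (h2j : k ≤ 2 * j)
    (χ₁ χ₂ : DirichletCharacter ℂ (p ^ k)) (ℓ₁ ℓ₂ : ℤ)
    (h₁ : ∀ x : ℤ, χ₁ ((1 + p ^ j * x : ℤ) : ZMod (p ^ k)) = eN (p ^ (k - j)) (ℓ₁ * x))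
    (h₂ : ∀ x : ℤ, χ₂ ((1 + p ^ j * x : ℤ) : ZMod (p ^ k)) = eN (p ^ (k - j)) (ℓ₂ * x)) :
    ∀ j' : ℕ, j ≤ j' → j' ≤ k →
      (DirichletCharacter.conductor (χ₁ * χ₂⁻¹) ∣ p ^ j' ↔
        ℓ₁ ≡ ℓ₂ [ZMOD (p ^ (k - j') : ℕ)]) :=
  conductor_dvd_iff_postnikov_congruence_general p j k hp χ₁ χ₂ ℓ₁ ℓ₂ h₁ h₂
end

section
/- Let p be an odd prime, let n ≥ 1, set k = 2n, and let χ be a primitive Dirichlet character of conductor p^k such that χ(1 + p^n x) = e_{p^n}(−x) for all integers x. Then for every Dirichlet character ψ modulo p^n, the Gauss sum of the character χ·ψ modulo p^k satisfies τ(χ·ψ) = p^n · e^{2πi/p^k}. -/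
/-!
Write `K = N²` with `N = p^n`, `ψ = e_K`, and `Θ = χ·ψ'`. The lifted character `ψ'` is trivial on
`1 + N·ℤ`, so `Θ(1 + N y) = ψ(-N y)`. Since `u = 1 + N y` is a unit, substituting `t ↦ u t` in the
Gauss sum gives `τ(Θ) = Σ_t Θ(t) ψ(t) ψ(N y (t - 1))` for every `y`. Averaging over `y` and using
orthogonality of `ψ` leaves only the `N` residues `t = 1 + N x`, on each of which
`Θ(t) ψ(t) = ψ(-N x) ψ(1 + N x) = ψ(1)`.
-/

open Complex

open Finset AddChar

lemma eN_val_eq_stdAddChar {K : ℕ} [NeZero K] (t : ZMod K) : eN K t.val = ZMod.stdAddChar t := by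
  rw [ZMod.stdAddChar_apply, ZMod.toCircle_apply, eN, Int.cast_natCast]

lemma eN_eq_stdAddChar_natCast_mul {K N : ℕ} [NeZero K] (hK : K = N * N) (x : ℤ) :
    eN N x = ZMod.stdAddChar ((N : ZMod K) * (x : ZMod K)) := by
  have hN : (N : ℂ) ≠ 0 := Nat.cast_ne_zero.mpr fun h => NeZero.ne K (by simp [hK, h])
  rw [← Int.cast_natCast, ← Int.cast_mul, ZMod.stdAddChar_coe, eN, hK]
  push_cast
  field_simp

lemma DirichletCharacter.changeLevel_apply_one_add_natCast_mul {R : Type*} [CommMonoidWithZero R]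
    {d m : ℕ} (hdm : d ∣ m) (hm : m ∣ d * d) (ψ : DirichletCharacter R d) (x : ZMod m) :
    changeLevel hdm ψ (1 + d * x) = 1 := by
  obtain ⟨z, rfl⟩ := ZMod.intCast_surjective x
  have hcop_sq : IsCoprime (1 + d * z) ((d * d : ℕ) : ℤ) := ⟨1 - d * z, z ^ 2, by push_cast; ring⟩
  have hcop : IsCoprime (1 + d * z) (m : ℤ) :=
    hcop_sq.of_isCoprime_of_dvd_right (Int.natCast_dvd_natCast.mpr hm)
  have := changeLevel_eq_cast_of_dvd' ψ hdm hcop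
  push_cast at this
  rw [this, ZMod.natCast_self, zero_mul, add_zero, map_one]

namespace ZMod

lemma card_filter_natCast_mul_eq_zero {K N : ℕ} [NeZero K] (hNK : N ∣ K) :
    #{s : ZMod K | (N : ZMod K) * s = 0} = N := by
  calc #{s : ZMod K | (N : ZMod K) * s = 0}
      = Nat.card (nsmulAddMonoidHom N : ZMod K →+ ZMod K).ker := by
        rw [← Fintype.card_subtype, ← Nat.card_eq_fintype_card]
        simp only [AddMonoidHom.mem_ker, nsmulAddMonoidHom_apply, nsmul_eq_mul]
    _ = N := by rw [IsAddCyclic.card_nsmulAddMonoidHom_ker, Nat.card_zmod, Nat.gcd_eq_right hNK]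

lemma exists_eq_natCast_mul_of_natCast_mul_eq_zero {K M N : ℕ} [NeZero K] (hK : K = M * N)
    {s : ZMod K} (hs : (N : ZMod K) * s = 0) : ∃ x : ZMod K, s = M * x := by
  have hN : 0 < N := Nat.pos_of_ne_zero fun h => NeZero.ne K (by simp [hK, h])
  have hdvd : N * M ∣ N * s.val := by
    rw [mul_comm, ← hK, ← ZMod.natCast_eq_zero_iff]
    push_cast
    rwa [ZMod.natCast_zmod_val]
  obtain ⟨x, hx⟩ := Nat.dvd_of_mul_dvd_mul_left hN hdvd
  exact ⟨x, by rw [← ZMod.natCast_zmod_val s, hx]; push_cast; rfl⟩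

end ZMod

section

variable {R : Type*} [CommRing R] {K N : ℕ} [NeZero K] (hK : K = N * N)
  {Θ : DirichletCharacter R K} {ψ : AddChar (ZMod K) R}
  (hΘ : ∀ x : ZMod K, Θ (1 + N * x) = ψ (-(N * x)))
include hK hΘ

lemma gaussSum_eq_sum_mul_apply_natCast_mul_sub_one (y : ZMod K) :
    gaussSum Θ ψ = ∑ t, Θ t * ψ t * ψ (N * y * (t - 1)) := by
  have hN : (N : ZMod K) * N = 0 := by rw [← Nat.cast_mul, ← hK, ZMod.natCast_self]
  have hu : IsUnit (1 + N * y) :=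
    .of_mul_eq_one (1 - N * y) (by linear_combination (-y ^ 2) * hN)
  rw [← gaussSum_mulShift Θ ψ hu.unit, hu.unit_spec, hΘ, gaussSum, mul_sum]
  refine sum_congr rfl fun t _ => ?_
  calc ψ (-(N * y)) * (Θ t * ψ.mulShift (1 + N * y) t)
      = Θ t * ψ (-(N * y) + (1 + N * y) * t) := by rw [mulShift_apply, map_add_eq_mul]; ring
    _ = Θ t * ψ (t + N * y * (t - 1)) := by ring_nf
    _ = Θ t * ψ t * ψ (N * y * (t - 1)) := by rw [map_add_eq_mul]; ring

lemma gaussSum_eq_sum_filter_natCast_mul_eq_zero [IsDomain R] [CharZero R] (hψ : ψ.IsPrimitive) :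
    gaussSum Θ ψ = ∑ s with (N : ZMod K) * s = 0, Θ (1 + s) * ψ (1 + s) := by
  have hK0 : (K : R) ≠ 0 := Nat.cast_ne_zero.mpr (NeZero.ne K)
  refine mul_left_cancel₀ hK0 ?_
  calc (K : R) * gaussSum Θ ψ
      = ∑ _y : ZMod K, gaussSum Θ ψ := by rw [sum_const, card_univ, ZMod.card, nsmul_eq_mul]
    _ = ∑ y : ZMod K, ∑ t, Θ t * ψ t * ψ (y * (N * (t - 1))) := by
        refine sum_congr rfl fun y _ => ?_
        rw [gaussSum_eq_sum_mul_apply_natCast_mul_sub_one hK hΘ y]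
        simp only [mul_assoc, mul_comm y]
    _ = ∑ t, Θ t * ψ t * ∑ y : ZMod K, ψ (y * (N * (t - 1))) := by
        rw [sum_comm]; simp only [mul_sum]
    _ = ∑ t, if (N : ZMod K) * (t - 1) = 0 then (K : R) * (Θ t * ψ t) else 0 := by
        refine sum_congr rfl fun t _ => ?_
        rw [sum_mulShift _ hψ, ZMod.card]
        split_ifs <;> simp [mul_comm]
    _ = ∑ s, if (N : ZMod K) * s = 0 then (K : R) * (Θ (1 + s) * ψ (1 + s)) else 0 := by
        rw [← Equiv.sum_comp (Equiv.addLeft (1 : ZMod K))]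
        simp only [Equiv.coe_addLeft, add_sub_cancel_left]
    _ = (K : R) * ∑ s with (N : ZMod K) * s = 0, Θ (1 + s) * ψ (1 + s) := by
        rw [mul_sum, sum_filter]

theorem gaussSum_eq_natCast_mul_apply_one [IsDomain R] [CharZero R] (hψ : ψ.IsPrimitive) :
    gaussSum Θ ψ = N * ψ 1 := by
  rw [gaussSum_eq_sum_filter_natCast_mul_eq_zero hK hΘ hψ, sum_congr rfl fun s hs => ?_, sum_const,
    ZMod.card_filter_natCast_mul_eq_zero ⟨N, hK⟩, nsmul_eq_mul]
  obtain ⟨x, rfl⟩ := ZMod.exists_eq_natCast_mul_of_natCast_mul_eq_zero hK (mem_filter.mp hs).2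
  rw [hΘ, ← map_add_eq_mul]
  ring_nf

end

/-- A coset on which all Gauss sums are equal to `p^n e^{2πi/p^k}` (Corollary 2.6). -/
theorem gauss_sum_coset_close_to_pn (p n : ℕ) (hp : p.Prime)
    (χ : DirichletCharacter ℂ (p ^ (2 * n)))
    (hpost : ∀ x : ℤ, χ ((1 + p ^ n * x : ℤ) : ZMod (p ^ (2 * n))) = eN (p ^ n) (-x)) :
    ∀ ψ : DirichletCharacter ℂ (p ^ n),
      haveI : NeZero (p ^ (2 * n)) := ⟨pow_ne_zero _ hp.ne_zero⟩
      (∑ t : ZMod (p ^ (2 * n)),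
          (χ * DirichletCharacter.changeLevel
            (pow_dvd_pow p (by omega : n ≤ 2 * n)) ψ) t * eN (p ^ (2 * n)) (t.val : ℤ))
        = (p : ℂ) ^ n * Complex.exp (2 * Real.pi * Complex.I / (p ^ (2 * n))) := by
  intro ψ
  have : NeZero (p ^ (2 * n)) := ⟨pow_ne_zero _ hp.ne_zero⟩
  have hK : p ^ (2 * n) = p ^ n * p ^ n := by rw [two_mul, pow_add]
  set Θ := χ * DirichletCharacter.changeLevel (pow_dvd_pow p (by omega : n ≤ 2 * n)) ψ
  have hΘ : ∀ x : ZMod (p ^ (2 * n)),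
      Θ (1 + ((p ^ n : ℕ) : ZMod (p ^ (2 * n))) * x) =
        ZMod.stdAddChar (-(((p ^ n : ℕ) : ZMod (p ^ (2 * n))) * x)) := by
    intro x
    obtain ⟨z, rfl⟩ := ZMod.intCast_surjective x
    rw [MulChar.mul_apply, DirichletCharacter.changeLevel_apply_one_add_natCast_mul _ hK.dvd,
      mul_one, ← mul_neg, ← Int.cast_neg, ← eN_eq_stdAddChar_natCast_mul hK, ← hpost]
    push_cast
    rfl
  calc _ = gaussSum Θ ZMod.stdAddChar := by simp only [gaussSum, eN_val_eq_stdAddChar]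
    _ = ((p ^ n : ℕ) : ℂ) * ZMod.stdAddChar 1 :=
      gaussSum_eq_natCast_mul_apply_one hK hΘ (ZMod.isPrimitive_stdAddChar _)
    _ = _ := by rw [← Int.cast_one, ZMod.stdAddChar_coe]; push_cast; ring_nf
end

section
/- Let p be an odd prime, k ≥ 2, and let χ be an even primitive Dirichlet character of conductor q = p^k. Let j be an integer with k/2 ≤ j < k, and let ℓ be an integer such that χ(1 + p^j x) = e_{p^{k−j}}(ℓ x) for all integers x. Let m be an integer with gcd(m, p) = 1. Then Σ_{ψ mod p^j, ψ(−1)=1} τ(χ·ψ) · conj((χ·ψ)(m)) = q · (φ(p^j)/(2 p^j)) · Σ_{± } e_{p^k}(± m) · [ℓ ≡ ∓ m (mod p^{k−j})], where the outer sum runs over all even Dirichlet characters ψ modulo p^j, the inner sum runs over the two signs, and [·] is 1 if the congruence holds and 0 otherwise. -/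
/-!
Multiplying `τ(χψ)` by `conj((χψ)(m))` for a unit `m` replaces the additive character `e(t)` in the
Gauss sum by `e(mt)`. Summing `Σ_s χ(s) ψ(s) e(ms)` over the even characters `ψ` mod `p^j` first,
orthogonality keeps only `s ≡ ±1 (mod p^j)`, and as `χ` is even the class of `-1` is the class
of `1` with `m` replaced by `-m`. On the coset `s = 1 + p^j x` the hypothesis on `χ` turns the
summand into `e_{p^k}(±m) e_{p^{k-j}}((ℓ ± m) x)`, whose sum over `x mod p^{k-j}` is `p^{k-j}`
or `0` according as `ℓ ≡ ∓m (mod p^{k-j})` or not.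
-/

open Complex

lemma eN_add (q : ℕ) (a b : ℤ) : eN q (a + b) = eN q a * eN q b := by
  rw [eN, eN, eN, ← Complex.exp_add]
  congr 1
  push_cast
  ring

lemma eN_mul_left {M R : ℕ} (hM : M ≠ 0) (x : ℤ) : eN (M * R) (M * x) = eN R x := by
  unfold eN
  congr 1
  push_cast
  rcases eq_or_ne (R : ℂ) 0 with hR | hR
  · simp [hR]
  · field_simp

lemma eN_eq_stdAddChar (N : ℕ) [NeZero N] (x : ℤ) : eN N x = ZMod.stdAddChar (x : ZMod N) :=
  (ZMod.stdAddChar_coe x).symm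

lemma sum_eN_mul_val (R : ℕ) [NeZero R] (c : ℤ) :
    ∑ x : ZMod R, eN R (c * x.val) = if (c : ZMod R) = 0 then (R : ℂ) else 0 := by
  simp_rw [eN_eq_stdAddChar]
  push_cast
  simp_rw [ZMod.natCast_val, ZMod.cast_id', id, mul_comm (c : ZMod R)]
  rw [AddChar.sum_mulShift _ (ZMod.isPrimitive_stdAddChar R), ZMod.card, Nat.cast_ite,
    Nat.cast_zero]

lemma RingHom.sum_ite_map_eq_neg_one {R S β : Type*} [Ring R] [Fintype R] [Ring S]
    [DecidableEq S] [AddCommMonoid β] (g : R →+* S) (f : R → β) :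
    ∑ s, (if g s = -1 then f s else 0) = ∑ s, (if g s = 1 then f (-s) else 0) := by
  refine Fintype.sum_equiv (Equiv.neg R) _ _ fun s => ?_
  simp only [Equiv.neg_apply, map_neg, neg_eq_iff_eq_neg, neg_neg]

lemma ZMod.castHom_eq_one_iff_dvd {M N : ℕ} [NeZero N] (h : M ∣ N) (s : ZMod N) :
    ZMod.castHom h (ZMod M) s = 1 ↔ (M : ℤ) ∣ s.val - 1 := by
  rw [ZMod.castHom_apply, ZMod.cast_eq_val, ← ZMod.intCast_zmod_eq_zero_iff_dvd, Int.cast_sub,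
    sub_eq_zero, Int.cast_natCast, Int.cast_one]

lemma ZMod.sum_ite_castHom_eq_one {β : Type*} [AddCommMonoid β] {M R N : ℕ} [NeZero N]
    [NeZero R] (hMR : M * R = N) (f : ZMod N → β) :
    ∑ s : ZMod N, (if ZMod.castHom (Dvd.intro R hMR) (ZMod M) s = 1 then f s else 0)
      = ∑ x : ZMod R, f ((1 + M * x.val : ℤ) : ZMod N) := by
  subst hMR
  have hM : (M : ℤ) ≠ 0 := mod_cast left_ne_zero_of_mul (NeZero.ne (M * R))
  rw [← Finset.sum_filter]
  refine (Finset.sum_nbij (fun x : ZMod R => ((1 + M * x.val : ℤ) : ZMod (M * R))) ?_ ?_ ?_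
    (fun _ _ => rfl)).symm
  · intro x _
    rw [Finset.mem_filter, map_intCast]
    simp
  · intro x _ y _ hxy
    rw [ZMod.intCast_eq_intCast_iff, Nat.cast_mul] at hxy
    have := Int.ModEq.mul_left_cancel' hM (Int.ModEq.add_left_cancel' 1 hxy)
    rw [← ZMod.intCast_eq_intCast_iff] at this
    simpa using this
  · intro s hs
    obtain ⟨t, ht⟩ := (ZMod.castHom_eq_one_iff_dvd _ s).mp (Finset.mem_filter.mp hs).2
    refine ⟨(t : ZMod R), Finset.mem_coe.mpr (Finset.mem_univ _), ?_⟩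
    have hval : ((t : ZMod R).val : ℤ) ≡ t [ZMOD R] := by
      rw [ZMod.val_intCast]
      exact Int.mod_modEq t R
    have hcongr : 1 + M * ((t : ZMod R).val : ℤ) ≡ s.val [ZMOD (M * R : ℕ)] := by
      rw [Nat.cast_mul, show (s.val : ℤ) = 1 + M * t by rw [← ht]; ring]
      exact (hval.mul_left' (c := M)).add_left 1
    simp only
    rw [(ZMod.intCast_eq_intCast_iff _ _ _).mpr hcongr, Int.cast_natCast, ZMod.natCast_zmod_val]

lemma sum_ite_castHom_eq_one_mul_stdAddChar {M R N : ℕ} [NeZero N] [NeZero R]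
    (hMR : M * R = N) (f : ZMod N → ℂ) (ℓ : ℤ)
    (hf : ∀ x : ℤ, f ((1 + M * x : ℤ) : ZMod N) = eN R (ℓ * x)) (a : ℤ) :
    ∑ s : ZMod N, (if ZMod.castHom (Dvd.intro R hMR) (ZMod M) s = 1 then
        f s * ZMod.stdAddChar ((a : ZMod N) * s) else 0)
      = eN N a * if ℓ ≡ -a [ZMOD R] then (R : ℂ) else 0 := by
  have hM : M ≠ 0 := left_ne_zero_of_mul (hMR ▸ NeZero.ne N)
  have hterm : ∀ x : ZMod R, f ((1 + M * x.val : ℤ) : ZMod N) *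
      ZMod.stdAddChar ((a : ZMod N) * ((1 + M * x.val : ℤ) : ZMod N))
        = eN N a * eN R ((ℓ + a) * x.val) := by
    intro x
    rw [hf, ← Int.cast_mul, ← eN_eq_stdAddChar, mul_add, mul_one, eN_add, mul_left_comm a,
      ← hMR, eN_mul_left hM, add_mul, eN_add]
    ring
  rw [ZMod.sum_ite_castHom_eq_one hMR, Finset.sum_congr rfl (fun x _ => hterm x),
    ← Finset.mul_sum, sum_eN_mul_val]
  refine congrArg _ (if_congr ?_ rfl rfl)
  rw [← ZMod.intCast_eq_intCast_iff, Int.cast_add, Int.cast_neg, add_eq_zero_iff_eq_neg]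

lemma MulChar.gaussSum_mul_star_apply {R : Type*} [CommRing R] [Fintype R]
    (χ : MulChar R ℂ) (ψ : AddChar R ℂ) (u : Rˣ) :
    gaussSum χ ψ * star (χ u) = gaussSum χ (ψ.mulShift u) := by
  rw [MulChar.star_apply', gaussSum_mulShift_eq, mul_comm]

lemma sum_mul_eN_val_mul_star_apply {N : ℕ} [NeZero N] (η : DirichletCharacter ℂ N)
    (u : (ZMod N)ˣ) :
    (∑ t, η t * eN N (t.val : ℤ)) * starRingEnd ℂ (η u)
      = gaussSum η (ZMod.stdAddChar.mulShift (u : ZMod N)) := by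
  rw [starRingEnd_apply, ← MulChar.gaussSum_mul_star_apply]
  simp only [gaussSum, eN_eq_stdAddChar, Int.cast_natCast, ZMod.natCast_zmod_val]

namespace DirichletCharacter

lemma mul_changeLevel_apply {M N : ℕ} (h : M ∣ N) (χ : DirichletCharacter ℂ N)
    (ψ : DirichletCharacter ℂ M) (s : ZMod N) :
    (χ * changeLevel h ψ) s = χ s * ψ (ZMod.castHom h (ZMod M) s) := by
  rw [MulChar.mul_apply]
  by_cases hs : IsUnit s
  · rw [← hs.unit_spec, changeLevel_eq_cast_of_dvd, ZMod.castHom_apply]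
  · rw [χ.map_nonunit hs, zero_mul, zero_mul]

open Classical in
lemma sum_ite_even_apply (M : ℕ) [NeZero M] (a : ZMod M) :
    ∑ ψ : DirichletCharacter ℂ M, (if ψ.Even then ψ a else 0)
      = (M.totient : ℂ) / 2 * ((if a = 1 then 1 else 0) + (if a = -1 then 1 else 0)) := by
  have hψ : ∀ ψ : DirichletCharacter ℂ M, (if ψ.Even then ψ a else 0) = (ψ a + ψ (-a)) / 2 := by
    intro ψ
    rcases ψ.even_or_odd with he | ho
    · rw [if_pos he, he.eval_neg]; ring
    · rw [if_neg ho.not_even, ho.eval_neg]; ring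
  simp_rw [hψ, ← Finset.sum_div, Finset.sum_add_distrib, sum_characters_eq, neg_eq_iff_eq_neg]
  split_ifs <;> ring

open Classical in
lemma sum_ite_even_gaussSum_mul_changeLevel {M N : ℕ} [NeZero M] [NeZero N] (h : M ∣ N)
    (χ : DirichletCharacter ℂ N) (e : AddChar (ZMod N) ℂ) :
    ∑ ψ : DirichletCharacter ℂ M, (if ψ.Even then gaussSum (χ * changeLevel h ψ) e else 0)
      = (M.totient : ℂ) / 2 *
          (∑ s, (if ZMod.castHom h (ZMod M) s = 1 then χ s * e s else 0) +
            ∑ s, (if ZMod.castHom h (ZMod M) s = -1 then χ s * e s else 0)) := by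
  have hψ : ∀ ψ : DirichletCharacter ℂ M,
      (if ψ.Even then gaussSum (χ * changeLevel h ψ) e else 0)
        = ∑ s, χ s * e s * (if ψ.Even then ψ (ZMod.castHom h (ZMod M) s) else 0) := by
    intro ψ
    split_ifs
    · simp only [gaussSum, mul_changeLevel_apply]
      exact Finset.sum_congr rfl fun s _ => by ring
    · simp
  simp_rw [hψ]
  rw [Finset.sum_comm]
  simp_rw [← Finset.mul_sum, sum_ite_even_apply]
  rw [← Finset.sum_add_distrib, Finset.mul_sum]
  exact Finset.sum_congr rfl fun s _ => by split_ifs <;> ring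

end DirichletCharacter

open Classical in
theorem gauss_sum_average_coset_linear_general (p j k : ℕ) (hp : p.Prime) (hjk : j < k)
    (χ : DirichletCharacter ℂ (p ^ k)) (hχeven : χ.Even)
    (ℓ m : ℤ) (hm : Int.gcd m p = 1)
    (hpost : ∀ x : ℤ, χ ((1 + p ^ j * x : ℤ) : ZMod (p ^ k)) = eN (p ^ (k - j)) (ℓ * x)) :
    haveI : NeZero (p ^ k) := ⟨pow_ne_zero _ hp.ne_zero⟩
    (∑ ψ : DirichletCharacter ℂ (p ^ j),
        if ψ.Even then
          (∑ t : ZMod (p ^ k),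
            (χ * DirichletCharacter.changeLevel (pow_dvd_pow p hjk.le) ψ) t *
              eN (p ^ k) (t.val : ℤ)) *
          (starRingEnd ℂ)
            ((χ * DirichletCharacter.changeLevel (pow_dvd_pow p hjk.le) ψ)
              ((m : ℤ) : ZMod (p ^ k)))
        else 0)
      = (p ^ k : ℂ) * ((p ^ j).totient : ℂ) / (2 * (p ^ j : ℂ)) *
          ((eN (p ^ k) m * if ℓ ≡ -m [ZMOD (p ^ (k - j) : ℕ)] then 1 else 0) +
           (eN (p ^ k) (-m) * if ℓ ≡ m [ZMOD (p ^ (k - j) : ℕ)] then 1 else 0)) := by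
  have : NeZero (p ^ k) := ⟨pow_ne_zero _ hp.ne_zero⟩
  have : NeZero (p ^ j) := ⟨pow_ne_zero _ hp.ne_zero⟩
  have : NeZero (p ^ (k - j)) := ⟨pow_ne_zero _ hp.ne_zero⟩
  have hMR : p ^ j * p ^ (k - j) = p ^ k := by rw [← pow_add, Nat.add_sub_cancel' hjk.le]
  have hcop : IsCoprime m ((p ^ k : ℕ) : ℤ) := by
    rw [Nat.cast_pow]
    exact (Int.isCoprime_iff_gcd_eq_one.mpr hm).pow_right
  have hm_unit : ((m : ℤ) : ZMod (p ^ k)) = ZMod.unitOfIsCoprime m hcop := rfl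
  have hf : ∀ x : ℤ, χ ((1 + (p ^ j : ℕ) * x : ℤ) : ZMod (p ^ k)) = eN (p ^ (k - j)) (ℓ * x) := by
    exact_mod_cast hpost
  simp_rw [hm_unit, sum_mul_eN_val_mul_star_apply]
  rw [DirichletCharacter.sum_ite_even_gaussSum_mul_changeLevel, RingHom.sum_ite_map_eq_neg_one]
  simp only [AddChar.mulShift_apply, hχeven.eval_neg, mul_neg, ← neg_mul,
    ZMod.coe_unitOfIsCoprime, ← Int.cast_neg]
  rw [sum_ite_castHom_eq_one_mul_stdAddChar hMR χ ℓ hf m,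
    sum_ite_castHom_eq_one_mul_stdAddChar hMR χ ℓ hf (-m), neg_neg]
  have hpk : (p : ℂ) ^ k = (p : ℂ) ^ j * ((p ^ (k - j) : ℕ) : ℂ) := by
    rw [← Nat.cast_pow, ← Nat.cast_pow, ← Nat.cast_mul, hMR]
  have hpj : (p : ℂ) ^ j ≠ 0 := pow_ne_zero _ (Nat.cast_ne_zero.mpr hp.ne_zero)
  rw [hpk]
  field_simp
  split_ifs <;> ring

open Classical in
/-- Average of Gauss sums times character values along an even coset, linear range
(Lemma 2.7). -/
theorem gauss_sum_average_coset_linear (p j k : ℕ) (hp : p.Prime) (hodd : Odd p)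
    (hk : 2 ≤ k) (hkj : k ≤ 2 * j) (hjk : j < k)
    (χ : DirichletCharacter ℂ (p ^ k)) (hχ : χ.IsPrimitive) (hχeven : χ.Even)
    (ℓ m : ℤ) (hm : Int.gcd m p = 1)
    (hpost : ∀ x : ℤ, χ ((1 + p ^ j * x : ℤ) : ZMod (p ^ k)) = eN (p ^ (k - j)) (ℓ * x)) :
    haveI : NeZero (p ^ k) := ⟨pow_ne_zero _ hp.ne_zero⟩
    (∑ ψ : DirichletCharacter ℂ (p ^ j),
        if ψ.Even then
          (∑ t : ZMod (p ^ k),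
            (χ * DirichletCharacter.changeLevel (pow_dvd_pow p hjk.le) ψ) t *
              eN (p ^ k) (t.val : ℤ)) *
          (starRingEnd ℂ)
            ((χ * DirichletCharacter.changeLevel (pow_dvd_pow p hjk.le) ψ)
              ((m : ℤ) : ZMod (p ^ k)))
        else 0)
      = (p ^ k : ℂ) * ((p ^ j).totient : ℂ) / (2 * (p ^ j : ℂ)) *
          ((eN (p ^ k) m * if ℓ ≡ -m [ZMOD (p ^ (k - j) : ℕ)] then 1 else 0) +
           (eN (p ^ k) (-m) * if ℓ ≡ m [ZMOD (p ^ (k - j) : ℕ)] then 1 else 0)) :=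
  gauss_sum_average_coset_linear_general p j k hp hjk χ hχeven ℓ m hm hpost
end

section
/- Let N ≥ 1 and let (a_n)_{n ∈ ℤ} be complex numbers with a_n = 0 unless 1 ≤ n ≤ N, and let H ≥ 1 be an integer. Then | Σ_n a_n |² ≤ (1 + N/H) · Σ_{|h| < H} (1 − |h|/H) Σ_{n ∈ ℤ} a_{n+h} · conj(a_n); in particular the right-hand side is a nonnegative real number. -/
/-!
Sum `a` over windows of length `H`: the window sums `b m = ∑_{j < H} a (m + j)` add up to
`H * ∑ a` and vanish outside an interval of `N + H - 1` integers, so Cauchy–Schwarz gives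
`H² |∑ a|² ≤ (N + H) ∑ |b m|²`. Expanding `|b m|²` and using that sums over `ℤ` are
invariant under translation, `∑ |b m|² = ∑_{|h| < H} (H - |h|) ∑ a (n + h) conj (a n)`,
which exhibits the right-hand side as a nonnegative real number.
-/

open Complex Finset ComplexConjugate

lemma card_filter_range_product_sub_eq (H : ℕ) {h : ℤ} (hh : h ∈ Ioo (-(H : ℤ)) H) :
    #{p ∈ range H ×ˢ range H | (p.1 : ℤ) - p.2 = h} = H - h.natAbs := by
  rw [mem_Ioo] at hh
  rw [← card_range (H - h.natAbs)]
  -- a pair with difference `h` is determined by its smaller entry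
  apply card_nbij' (fun p : ℕ × ℕ => min p.1 p.2) (fun i => (i + h.toNat, i + (-h).toNat))
  · intro p hp
    simp only [coe_filter, mem_product, mem_range, Set.mem_ofPred_eq, coe_range, Set.mem_Iio] at *
    omega
  · intro i hi
    simp only [coe_filter, mem_product, mem_range, Set.mem_ofPred_eq, coe_range, Set.mem_Iio] at *
    omega
  · intro p hp
    simp only [coe_filter, mem_product, mem_range, Set.mem_ofPred_eq] at hp
    ext <;> dsimp only <;> omega
  · intro i hi
    simp only [coe_range, Set.mem_Iio] at hi
    dsimp only
    omega

lemma sum_range_sum_range_sub {M : Type*} [AddCommMonoid M] (H : ℕ) (f : ℤ → M) :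
    ∑ j ∈ range H, ∑ k ∈ range H, f (j - k) = ∑ h ∈ Ioo (-(H : ℤ)) H, (H - h.natAbs) • f h := by
  rw [← sum_product', ← sum_fiberwise_of_maps_to (g := fun p : ℕ × ℕ => (p.1 : ℤ) - p.2)
    (t := Ioo (-(H : ℤ)) H) fun p hp => by
      simp only [mem_product, mem_range, mem_Ioo] at *
      omega]
  refine sum_congr rfl fun h hh => ?_
  rw [sum_congr rfl fun p hp => congrArg f (mem_filter.mp hp).2, sum_const,
    card_filter_range_product_sub_eq H hh]

def windowSum {M : Type*} [AddCommMonoid M] (a : ℤ → M) (H : ℕ) (m : ℤ) : M :=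
  ∑ j ∈ range H, a (m + j)

lemma windowSum_eq_zero_of_notMem {M : Type*} [AddCommMonoid M] {a : ℤ → M} {p q : ℤ}
    (ha : ∀ n ∉ Icc p q, a n = 0) (H : ℕ) {m : ℤ} (hm : m ∉ Icc (p + 1 - H) q) :
    windowSum a H m = 0 :=
  sum_eq_zero fun j hj => ha _ fun hmj => hm <| by
    simp only [mem_Icc, mem_range] at *
    omega

lemma tsum_windowSum {M : Type*} [AddCommMonoid M] [TopologicalSpace M] [ContinuousAdd M]
    [T2Space M] {a : ℤ → M} (ha : Summable a) (H : ℕ) :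
    ∑' m, windowSum a H m = H • ∑' n, a n := by
  have hshift (j : ℕ) : ∑' m, a (m + j) = ∑' n, a n := (Equiv.addRight (j : ℤ)).tsum_eq a
  unfold windowSum
  rw [Summable.tsum_finsetSum (f := fun (j : ℕ) (m : ℤ) => a (m + j))
    fun j _ => (Equiv.addRight (j : ℤ)).summable_iff.mpr ha]
  simp only [hshift, sum_const, card_range]

lemma ofReal_tsum_sq_norm_windowSum {a : ℤ → ℂ} (ha : a.HasFiniteSupport) (H : ℕ) :
    ((∑' m, ‖windowSum a H m‖ ^ 2 : ℝ) : ℂ) =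
      ∑ h ∈ Ioo (-(H : ℤ)) H, ((H - h.natAbs : ℕ) : ℂ) * ∑' n, a (n + h) * conj (a n) := by
  have hshift (i : ℤ) : (fun n => a (n + i)).HasFiniteSupport :=
    ha.comp_of_injective (add_left_injective i)
  have hsummable (j k : ℕ) : Summable fun m => a (m + j) * conj (a (m + k)) :=
    summable_of_hasFiniteSupport ((hshift j).mul_left _)
  have hcorr (j k : ℕ) :
      ∑' m, a (m + j) * conj (a (m + k)) = ∑' n, a (n + (j - k : ℤ)) * conj (a n) := by
    rw [← (Equiv.addRight (k : ℤ)).tsum_eq (fun n => a (n + (j - k : ℤ)) * conj (a n))]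
    refine tsum_congr fun m => ?_
    rw [Equiv.coe_addRight, add_add_sub_cancel]
  simp_rw [Complex.ofReal_tsum, ofReal_pow, ← mul_conj', windowSum, map_sum, sum_mul_sum]
  rw [Summable.tsum_finsetSum fun j _ => summable_sum fun k _ => hsummable j k]
  have hinner (j : ℕ) : ∑' m, ∑ k ∈ range H, a (m + j) * conj (a (m + k)) =
      ∑ k ∈ range H, ∑' m, a (m + j) * conj (a (m + k)) :=
    Summable.tsum_finsetSum fun k _ => hsummable j k
  simp_rw [hinner, hcorr]
  rw [sum_range_sum_range_sub H fun h => ∑' n, a (n + h) * conj (a n)]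
  simp only [nsmul_eq_mul]

lemma sq_norm_tsum_le_card_mul {ι E : Type*} [SeminormedAddCommGroup E] {b : ι → E}
    {s : Finset ι} (hb : ∀ i ∉ s, b i = 0) :
    ‖∑' i, b i‖ ^ 2 ≤ #s * ∑' i, ‖b i‖ ^ 2 := by
  rw [tsum_eq_sum hb, tsum_eq_sum fun i hi => by simp [hb i hi]]
  calc ‖∑ i ∈ s, b i‖ ^ 2 ≤ (∑ i ∈ s, ‖b i‖) ^ 2 := by gcongr; exact norm_sum_le _ _
    _ ≤ #s * ∑ i ∈ s, ‖b i‖ ^ 2 := sq_sum_le_card_mul_sum_sq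

lemma sq_mul_sq_norm_tsum_le_tsum_sq_norm_windowSum {E : Type*} [NormedAddCommGroup E]
    [NormedSpace ℝ E] {a : ℤ → E} {N : ℕ} (ha : ∀ n ∉ Icc 1 (N : ℤ), a n = 0) (H : ℕ) :
    (H : ℝ) ^ 2 * ‖∑' n, a n‖ ^ 2 ≤ (N + H) * ∑' m, ‖windowSum a H m‖ ^ 2 := by
  have hsum : Summable a := summable_of_hasFiniteSupport <|
    (Icc 1 (N : ℤ)).finite_toSet.subset (Function.support_subset_iff'.mpr ha)
  have hcard : (#(Icc (1 + 1 - H : ℤ) N) : ℝ) ≤ N + H := by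
    rw [Int.card_Icc]
    exact_mod_cast (by omega : (N + 1 - (1 + 1 - H : ℤ)).toNat ≤ N + H)
  calc (H : ℝ) ^ 2 * ‖∑' n, a n‖ ^ 2 = ‖∑' m, windowSum a H m‖ ^ 2 := by
        rw [tsum_windowSum hsum, RCLike.norm_nsmul ℝ, nsmul_eq_mul, mul_pow]
    _ ≤ #(Icc (1 + 1 - H : ℤ) N) * ∑' m, ‖windowSum a H m‖ ^ 2 :=
        sq_norm_tsum_le_card_mul fun m hm => windowSum_eq_zero_of_notMem ha H hm
    _ ≤ (N + H) * ∑' m, ‖windowSum a H m‖ ^ 2 := by gcongr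

lemma one_sub_abs_div_eq_sub_natAbs_div {H : ℕ} {h : ℤ} (hh : h ∈ Ioo (-(H : ℤ)) H) :
    (1 : ℂ) - ((|h| : ℤ) : ℂ) / H = ((H - h.natAbs : ℕ) : ℂ) / H := by
  rw [mem_Ioo] at hh
  have hH : (H : ℂ) ≠ 0 := by norm_cast; omega
  rw [Int.abs_eq_natAbs, Int.cast_natCast, Nat.cast_sub (by omega)]
  field_simp

theorem van_der_corput_shifting_general (N H : ℕ) (hH : 1 ≤ H) (a : ℤ → ℂ)
    (ha : ∀ n : ℤ, a n ≠ 0 → 1 ≤ n ∧ n ≤ (N : ℤ)) :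
    ((1 + (N : ℂ) / H) * ∑ h ∈ Finset.Ioo (-(H : ℤ)) (H : ℤ),
        ((1 : ℂ) - ((|h| : ℤ) : ℂ) / H) * ∑' n : ℤ, a (n + h) * (starRingEnd ℂ) (a n)).im
      = 0 ∧
    ‖∑' n : ℤ, a n‖ ^ 2 ≤
      ((1 + (N : ℂ) / H) * ∑ h ∈ Finset.Ioo (-(H : ℤ)) (H : ℤ),
        ((1 : ℂ) - ((|h| : ℤ) : ℂ) / H) * ∑' n : ℤ, a (n + h) * (starRingEnd ℂ) (a n)).re := by
  have hsupp : ∀ n ∉ Icc 1 (N : ℤ), a n = 0 := fun n hn =>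
    by_contra fun h => hn (mem_Icc.mpr (ha n h))
  set S := ∑' m, ‖windowSum a H m‖ ^ 2
  have hS : (1 + (N : ℂ) / H) * ∑ h ∈ Ioo (-(H : ℤ)) H,
      ((1 : ℂ) - ((|h| : ℤ) : ℂ) / H) * ∑' n, a (n + h) * conj (a n) =
      (((1 + N / H) * (S / H) : ℝ) : ℂ) := by
    rw [sum_congr rfl fun h hh => by
        rw [one_sub_abs_div_eq_sub_natAbs_div hh, div_mul_eq_mul_div], ← sum_div,
      ← ofReal_tsum_sq_norm_windowSum ((Icc 1 (N : ℤ)).finite_toSet.subset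
        (Function.support_subset_iff'.mpr hsupp))]
    simp only [ofReal_mul, ofReal_add, ofReal_one, ofReal_div, ofReal_natCast]
    rfl
  rw [hS, ofReal_im, ofReal_re]
  refine ⟨rfl, ?_⟩
  have hHpos : (0 : ℝ) < H := by exact_mod_cast hH
  rw [show (1 + N / H) * (S / H) = (N + H) * S / H ^ 2 by field_simp; ring,
    le_div_iff₀ (by positivity)]
  linarith [sq_mul_sq_norm_tsum_le_tsum_sq_norm_windowSum hsupp H]

/-- van der Corput shifting inequality (Lemma 4.1): the shifted-correlation expression is
a nonnegative real number bounding `|Σ a_n|²` (its imaginary part vanishes, and the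
inequality holds for its real part). -/
theorem van_der_corput_shifting (N H : ℕ) (hN : 1 ≤ N) (hH : 1 ≤ H) (a : ℤ → ℂ)
    (ha : ∀ n : ℤ, a n ≠ 0 → 1 ≤ n ∧ n ≤ (N : ℤ)) :
    ((1 + (N : ℂ) / H) * ∑ h ∈ Finset.Ioo (-(H : ℤ)) (H : ℤ),
        ((1 : ℂ) - ((|h| : ℤ) : ℂ) / H) * ∑' n : ℤ, a (n + h) * (starRingEnd ℂ) (a n)).im
      = 0 ∧
    ‖∑' n : ℤ, a n‖ ^ 2 ≤
      ((1 + (N : ℂ) / H) * ∑ h ∈ Finset.Ioo (-(H : ℤ)) (H : ℤ),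
        ((1 : ℂ) - ((|h| : ℤ) : ℂ) / H) * ∑' n : ℤ, a (n + h) * (starRingEnd ℂ) (a n)).re :=
  van_der_corput_shifting_general N H hH a ha
end

section
/- Let N ≥ 1, let (a_n)_{n ∈ ℤ} be complex numbers with a_n = 0 unless 1 ≤ n ≤ N, and let H ≥ 1 be an integer. Define D_H(x) = Σ_{h=1}^{H} e(hx) and A(x) = Σ_{n} a_n e(nx), where e(x) = e^{2πix}. Then H² · | Σ_n a_n |² ≤ (N + H) · ∫_0^1 |D_H(x) A(x)|² dx. -/
open Complex ComplexConjugate Finset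
open scoped Real

/-!
Writing `c m = ∑_{h=1}^{H} a (m - h)`, the product `D_H A` is the trigonometric polynomial
`∑ c m e(m x)` with frequencies in `[2, N + H]`. Evaluating it at `x = 0` gives
`∑ c m = H ∑ a n`, so Cauchy–Schwarz over the at most `N + H` frequencies bounds
`H² |∑ a n|²` by `(N + H) ∑ |c m|²`, which is `(N + H) ∫₀¹ |D_H A|²` by Parseval.
-/

theorem integral_exp_two_pi_I_int_mul (k : ℤ) :
    ∫ x in (0 : ℝ)..1, cexp (2 * π * I * k * x) = if k = 0 then 1 else 0 := by
  split_ifs with hk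
  · simp [hk]
  have hc : 2 * (π : ℂ) * I * k ≠ 0 := by simp [hk, Real.pi_ne_zero]
  rw [integral_exp_mul_complex hc, sub_eq_zero.mpr, zero_div]
  simpa [mul_comm] using exp_int_mul_two_pi_mul_I k

theorem exp_mul_conj_exp (m n : ℤ) (x : ℝ) :
    cexp (2 * π * I * m * x) * conj (cexp (2 * π * I * n * x)) =
      cexp (2 * π * I * (m - n : ℤ) * x) := by
  rw [← exp_conj, ← exp_add]
  congr 1
  simp only [map_mul, conj_I, conj_ofReal, map_intCast, map_ofNat]
  push_cast
  ring

theorem integral_norm_sq_sum_exp (s : Finset ℤ) (c : ℤ → ℂ) :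
    ∫ x in (0 : ℝ)..1, ‖∑ m ∈ s, c m * cexp (2 * π * I * m * x)‖ ^ 2 =
      ∑ m ∈ s, ‖c m‖ ^ 2 := by
  have expand : ∀ x : ℝ, ((‖∑ m ∈ s, c m * cexp (2 * π * I * m * x)‖ ^ 2 : ℝ) : ℂ) =
      ∑ m ∈ s, ∑ n ∈ s, c m * conj (c n) * cexp (2 * π * I * (m - n : ℤ) * x) := by
    intro x
    rw [ofReal_pow, ← mul_conj', map_sum, sum_mul_sum]
    refine sum_congr rfl fun m _ => sum_congr rfl fun n _ => ?_
    rw [map_mul, mul_mul_mul_comm, exp_mul_conj_exp]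
  have hintegrable : ∀ (z : ℂ) (k : ℤ),
      IntervalIntegrable (fun x : ℝ => z * cexp (2 * π * I * k * x)) MeasureTheory.volume 0 1 :=
    fun z k => by
    apply Continuous.intervalIntegrable; fun_prop
  apply ofReal_injective
  rw [← intervalIntegral.integral_ofReal, intervalIntegral.integral_congr fun x _ => expand x,
    intervalIntegral.integral_finsetSum fun m _ => by
      apply Continuous.intervalIntegrable; fun_prop, ofReal_sum]
  refine sum_congr rfl fun m hm => ?_
  rw [intervalIntegral.integral_finsetSum fun n _ => hintegrable _ _]
  simp only [ofReal_pow, intervalIntegral.integral_const_mul, integral_exp_two_pi_I_int_mul,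
    sub_eq_zero, mul_ite, mul_one, mul_zero, sum_ite_eq, if_pos hm, mul_conj']

theorem norm_sum_sq_le_card_mul_sum_norm_sq {ι E : Type*} [SeminormedAddCommGroup E]
    (s : Finset ι) (f : ι → E) : ‖∑ i ∈ s, f i‖ ^ 2 ≤ #s * ∑ i ∈ s, ‖f i‖ ^ 2 :=
  (pow_le_pow_left₀ (norm_nonneg _) (norm_sum_le _ _) 2).trans sq_sum_le_card_mul_sum_sq

theorem exp_mul_sum_exp_eq_sum_exp_sub {a : ℤ → ℂ} {s t : Finset ℤ} (ha : ∀ n ∉ s, a n = 0)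
    (k : ℤ) (hst : ∀ n ∈ s, n + k ∈ t) (x : ℝ) :
    cexp (2 * π * I * k * x) * ∑ n ∈ s, a n * cexp (2 * π * I * n * x) =
      ∑ m ∈ t, a (m - k) * cexp (2 * π * I * m * x) := by
  have hsub : s.map (addRightEmbedding k) ⊆ t := by
    simpa [subset_iff] using hst
  rw [← sum_subset hsub, sum_map, mul_sum]
  · refine sum_congr rfl fun n _ => ?_
    rw [addRightEmbedding_apply, add_sub_cancel_right, mul_left_comm, ← exp_add]
    push_cast
    ring_nf
  · intro m _ hm
    rw [ha (m - k) fun hmk => hm (mem_map.2 ⟨m - k, hmk, by simp⟩), zero_mul]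

theorem sum_exp_mul_sum_exp_eq_sum_sum_sub {a : ℤ → ℂ} {s u : Finset ℤ} (T : Finset ℕ)
    (ha : ∀ n ∉ s, a n = 0) (hsu : ∀ n ∈ s, ∀ h ∈ T, n + h ∈ u) (x : ℝ) :
    (∑ h ∈ T, cexp (2 * π * I * h * x)) * ∑ n ∈ s, a n * cexp (2 * π * I * n * x) =
      ∑ m ∈ u, (∑ h ∈ T, a (m - h)) * cexp (2 * π * I * m * x) := by
  calc _ = ∑ h ∈ T, ∑ m ∈ u, a (m - h) * cexp (2 * π * I * m * x) := by
        rw [sum_mul]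
        refine sum_congr rfl fun h hh => ?_
        rw [← exp_mul_sum_exp_eq_sum_exp_sub ha h fun n hn => hsu n hn h hh, Int.cast_natCast]
    _ = _ := by
        rw [sum_comm]
        simp_rw [sum_mul]

theorem van_der_corput_amplified_general (N H : ℕ) (a : ℤ → ℂ)
    (ha : ∀ n : ℤ, a n ≠ 0 → 1 ≤ n ∧ n ≤ (N : ℤ)) :
    (H : ℝ) ^ 2 * ‖∑' n : ℤ, a n‖ ^ 2 ≤
      ((N : ℝ) + H) * ∫ x in (0 : ℝ)..1,
        ‖((∑ h ∈ Finset.Icc 1 H, Complex.exp (2 * Real.pi * Complex.I * h * x)) *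
            ∑' n : ℤ, a n * Complex.exp (2 * Real.pi * Complex.I * n * x))‖ ^ 2 := by
  set M := Icc 2 ((N : ℤ) + H)
  set c : ℤ → ℂ := fun m => ∑ h ∈ Icc 1 H, a (m - h)
  have ha0 : ∀ n ∉ Icc 1 (N : ℤ), a n = 0 := fun n hn =>
    by_contra fun h => hn (mem_Icc.2 (ha n h))
  have hprod : ∀ x : ℝ, (∑ h ∈ Icc 1 H, cexp (2 * π * I * h * x)) *
      ∑' n : ℤ, a n * cexp (2 * π * I * n * x) = ∑ m ∈ M, c m * cexp (2 * π * I * m * x) := by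
    intro x
    rw [tsum_eq_sum fun n hn => by rw [ha0 n hn, zero_mul]]
    refine sum_exp_mul_sum_exp_eq_sum_sum_sub _ ha0 (fun n hn h hh => ?_) x
    simp only [M, mem_Icc] at hn hh ⊢
    omega
  have hsum : (H : ℂ) * ∑' n, a n = ∑ m ∈ M, c m := by simpa using hprod 0
  have hcard : (#M : ℝ) ≤ N + H := by
    rw [Int.card_Icc]
    exact_mod_cast (by omega : ((N : ℤ) + H + 1 - 2).toNat ≤ N + H)
  calc (H : ℝ) ^ 2 * ‖∑' n, a n‖ ^ 2 = ‖∑ m ∈ M, c m‖ ^ 2 := by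
        rw [← hsum, norm_mul, Complex.norm_natCast, mul_pow]
    _ ≤ #M * ∑ m ∈ M, ‖c m‖ ^ 2 := norm_sum_sq_le_card_mul_sum_norm_sq _ _
    _ ≤ (N + H) * ∑ m ∈ M, ‖c m‖ ^ 2 := by gcongr
    _ = _ := by simp_rw [hprod, integral_norm_sq_sum_exp]

/-- The amplified second-moment form of van der Corput's inequality:
`H² |Σ a_n|² ≤ (N+H) ∫₀¹ |D_H(x) A(x)|² dx`. -/
theorem van_der_corput_amplified (N H : ℕ) (hN : 1 ≤ N) (hH : 1 ≤ H) (a : ℤ → ℂ)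
    (ha : ∀ n : ℤ, a n ≠ 0 → 1 ≤ n ∧ n ≤ (N : ℤ)) :
    (H : ℝ) ^ 2 * ‖∑' n : ℤ, a n‖ ^ 2 ≤
      ((N : ℝ) + H) * ∫ x in (0 : ℝ)..1,
        ‖((∑ h ∈ Finset.Icc 1 H, Complex.exp (2 * Real.pi * Complex.I * h * x)) *
            ∑' n : ℤ, a n * Complex.exp (2 * Real.pi * Complex.I * n * x))‖ ^ 2 :=
  van_der_corput_amplified_general N H a ha
end

section
/- Let q be a positive integer, q₀ a positive divisor of q, χ a Dirichlet character modulo q, and (a_n)_{n ∈ ℤ} a finitely supported sequence of complex numbers. Then Σ_{ψ mod q₀} | Σ_{n ∈ ℤ} a_n (χ·ψ)(n) |² = φ(q₀) · Σ_{h ∈ ℤ} Σ_{n ∈ ℤ} a_{n + h q₀} · conj(a_n) · χ(n + h q₀) · conj(χ(n)), where the outer sum on the left runs over all Dirichlet characters ψ modulo q₀ and χ·ψ denotes the character modulo q obtained as the product of χ with the lift of ψ; in particular, | Σ_n a_n χ(n) |² is bounded by the left-hand side. -/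
/-!
Write `c n = a n χ(n)`. Expanding the squares, the left side is
`∑_{m,n} c m conj(c n) ∑_ψ ψ(m) conj(ψ(n))`, and orthogonality of the characters mod `q₀`
collapses the inner sum to `φ(q₀)` on the pairs `m ≡ n (mod q₀)` and to `0` elsewhere; this needs
`n` to be a unit mod `q₀`, which holds whenever `c n ≠ 0` because `χ` vanishes off the units
mod `q`. Parametrising the pairs `m ≡ n` as `m = n + h q₀` gives the right side. The inequality
is the contribution of the trivial character `ψ = 1`.
-/

open ComplexConjugate DirichletCharacter

namespace DirichletCharacter

lemma mul_changeLevel_apply_s17 {R : Type*} [CommMonoidWithZero R] {m n : ℕ} (hm : n ∣ m)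
    (χ : DirichletCharacter R m) (ψ : DirichletCharacter R n) (x : ZMod m) :
    (χ * changeLevel hm ψ) x = χ x * ψ (ZMod.castHom hm (ZMod n) x) := by
  rw [MulChar.mul_apply]
  by_cases hx : IsUnit x
  · obtain ⟨u, rfl⟩ := hx
    rw [changeLevel_eq_cast_of_dvd, ZMod.castHom_apply]
  · rw [MulChar.map_nonunit χ hx, zero_mul, zero_mul]

lemma sum_apply_mul_conj_apply {N : ℕ} [NeZero N] (m : ZMod N) {n : ZMod N} (hn : IsUnit n) :
    ∑ ψ : DirichletCharacter ℂ N, ψ m * conj (ψ n) =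
      if m = n then (N.totient : ℂ) else 0 := by
  obtain ⟨u, rfl⟩ := hn
  convert sum_char_inv_mul_char_eq ℂ u.isUnit m using 1
  · refine Finset.sum_congr rfl fun ψ _ => ?_
    rw [mul_comm, ← Complex.star_def, MulChar.star_apply', MulChar.inv_apply, Ring.inverse_unit,
      ZMod.inv_coe_unit]
  · simp only [eq_comm]

theorem sum_sq_norm_sum_mul_apply {N : ℕ} [NeZero N] {ι : Type*} (s : Finset ι) (c : ι → ℂ)
    (f : ι → ZMod N) (hc : ∀ i ∈ s, c i ≠ 0 → IsUnit (f i)) :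
    ((∑ ψ : DirichletCharacter ℂ N, ‖∑ i ∈ s, c i * ψ (f i)‖ ^ 2 : ℝ) : ℂ) =
      N.totient * ∑ i ∈ s, ∑ j ∈ s, if f i = f j then c i * conj (c j) else 0 := by
  have orthogonality : ∀ i ∈ s, ∀ j ∈ s,
      c i * conj (c j) * ∑ ψ : DirichletCharacter ℂ N, ψ (f i) * conj (ψ (f j)) =
        N.totient * if f i = f j then c i * conj (c j) else 0 := by
    intro i _ j hj
    by_cases hcj : c j = 0
    · simp [hcj]
    · rw [sum_apply_mul_conj_apply _ (hc j hj hcj)]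
      split_ifs <;> ring
  calc ((∑ ψ : DirichletCharacter ℂ N, ‖∑ i ∈ s, c i * ψ (f i)‖ ^ 2 : ℝ) : ℂ)
      = ∑ ψ : DirichletCharacter ℂ N, ∑ i ∈ s, ∑ j ∈ s,
          c i * conj (c j) * (ψ (f i) * conj (ψ (f j))) := by
        push_cast
        refine Finset.sum_congr rfl fun ψ _ => ?_
        rw [← Complex.mul_conj', map_sum, Finset.sum_mul_sum]
        exact Finset.sum_congr rfl fun i _ => Finset.sum_congr rfl fun j _ => by
          simp only [map_mul]; ring
    _ = ∑ i ∈ s, ∑ j ∈ s, c i * conj (c j) *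
          ∑ ψ : DirichletCharacter ℂ N, ψ (f i) * conj (ψ (f j)) := by
        simp_rw [Finset.mul_sum]
        rw [Finset.sum_comm]
        exact Finset.sum_congr rfl fun i _ => Finset.sum_comm
    _ = _ := by
        rw [Finset.mul_sum]
        refine Finset.sum_congr rfl fun i hi => ?_
        rw [Finset.mul_sum]
        exact Finset.sum_congr rfl fun j hj => orthogonality i hi j hj

end DirichletCharacter

section ResidueClassShift

variable {α : Type*} (d : ℕ) [NeZero d]

lemma add_mul_natCast_injective (n : ℤ) : Function.Injective fun h : ℤ => n + h * d :=
  (add_right_injective n).comp (mul_left_injective₀ (by exact_mod_cast NeZero.ne d))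

lemma tsum_add_mul_eq_tsum_ite [AddCommMonoid α] [TopologicalSpace α] (u : ℤ → α) (n : ℤ) :
    ∑' h : ℤ, u (n + h * d) = ∑' m : ℤ, if (m : ZMod d) = n then u m else 0 := by
  rw [← (add_mul_natCast_injective d n).tsum_eq
    (f := fun m : ℤ => if (m : ZMod d) = n then u m else 0)]
  · simp
  · intro m hm
    have hmn : (m : ZMod d) = n := by_contra fun h => hm (if_neg h)
    obtain ⟨k, hk⟩ := (ZMod.intCast_eq_intCast_iff_dvd_sub n m d).mp hmn.symm
    exact ⟨k, by linarith⟩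

lemma tsum_tsum_add_mul_mul_eq_sum_sum_ite [NonUnitalNonAssocSemiring α] [TopologicalSpace α]
    [IsTopologicalSemiring α] [T2Space α] {u v : ℤ → α} {s : Finset ℤ}
    (hu : ∀ m ∉ s, u m = 0) (hv : ∀ n ∉ s, v n = 0) :
    ∑' h : ℤ, ∑' n : ℤ, u (n + h * d) * v n =
      ∑ m ∈ s, ∑ n ∈ s, if (m : ZMod d) = n then u m * v n else 0 := by
  have summable (n : ℤ) : Summable fun h : ℤ => u (n + h * d) := by
    refine summable_of_hasFiniteSupport <|
      (s.finite_toSet.preimage (add_mul_natCast_injective d n).injOn).subset fun h hh => ?_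
    by_contra hs
    exact hh (hu _ hs)
  calc ∑' h : ℤ, ∑' n : ℤ, u (n + h * d) * v n
      = ∑' h : ℤ, ∑ n ∈ s, u (n + h * d) * v n :=
        tsum_congr fun h => tsum_eq_sum fun n hn => by rw [hv n hn, mul_zero]
    _ = ∑ n ∈ s, ∑' h : ℤ, u (n + h * d) * v n :=
        Summable.tsum_finsetSum fun n _ => (summable n).mul_right _
    _ = ∑ n ∈ s, (∑ m ∈ s, if (m : ZMod d) = n then u m else 0) * v n :=
        Finset.sum_congr rfl fun n _ => by
          rw [(summable n).tsum_mul_right, tsum_add_mul_eq_tsum_ite,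
            tsum_eq_sum fun m hm => by simp [hu m hm]]
    _ = _ := by
        simp_rw [Finset.sum_mul, ite_mul, zero_mul]
        exact Finset.sum_comm

end ResidueClassShift

theorem coset_second_moment_identity_general (q q₀ : ℕ) (hq₀ : q₀ ∣ q)
    (hq₀pos : 0 < q₀) (χ : DirichletCharacter ℂ q) (a : ℤ → ℂ)
    (ha : (Function.support a).Finite) :
    ((∑ ψ : DirichletCharacter ℂ q₀,
        ‖∑' n : ℤ,
          a n * (χ * DirichletCharacter.changeLevel hq₀ ψ) ((n : ℤ) : ZMod q)‖ ^ 2 : ℝ) : ℂ)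
      = (q₀.totient : ℂ) * ∑' h : ℤ, ∑' n : ℤ,
          a (n + h * q₀) * (starRingEnd ℂ) (a n) *
            χ ((n + h * q₀ : ℤ) : ZMod q) * (starRingEnd ℂ) (χ ((n : ℤ) : ZMod q)) ∧
    ‖∑' n : ℤ, a n * χ ((n : ℤ) : ZMod q)‖ ^ 2 ≤
      ∑ ψ : DirichletCharacter ℂ q₀,
        ‖∑' n : ℤ,
          a n * (χ * DirichletCharacter.changeLevel hq₀ ψ) ((n : ℤ) : ZMod q)‖ ^ 2 := by
  have : NeZero q₀ := ⟨hq₀pos.ne'⟩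
  set c : ℤ → ℂ := fun n => a n * χ n
  set S := ha.toFinset
  have ha_zero (n : ℤ) (hn : n ∉ S) : a n = 0 := by simpa [S] using hn
  have c_zero (n : ℤ) (hn : n ∉ S) : c n = 0 := by simp [c, ha_zero n hn]
  have twisted_sum (ψ : DirichletCharacter ℂ q₀) :
      ∑' n : ℤ, a n * (χ * changeLevel hq₀ ψ) n = ∑ n ∈ S, c n * ψ n := by
    rw [tsum_eq_sum fun n hn => by rw [ha_zero n hn, zero_mul]]
    refine Finset.sum_congr rfl fun n _ => ?_
    rw [mul_changeLevel_apply_s17, map_intCast (ZMod.castHom hq₀ (ZMod q₀)), mul_assoc]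
  have c_unit (n : ℤ) (_ : n ∈ S) (hn : c n ≠ 0) : IsUnit (n : ZMod q₀) := by
    have hχ : IsUnit (n : ZMod q) := by_contra fun h => hn (by simp [c, χ.map_nonunit h])
    simpa using hχ.map (ZMod.castHom hq₀ (ZMod q₀))
  refine ⟨?_, ?_⟩
  · have correlation (h n : ℤ) :
        a (n + h * q₀) * conj (a n) * χ ((n + h * q₀ : ℤ) : ZMod q) * conj (χ n) =
          c (n + h * q₀) * conj (c n) := by
      simp only [c, map_mul]; push_cast; ring
    simp_rw [twisted_sum, correlation]
    rw [sum_sq_norm_sum_mul_apply S c _ c_unit,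
      tsum_tsum_add_mul_mul_eq_sum_sum_ite q₀ c_zero fun n hn => by rw [c_zero n hn, map_zero]]
  · have h_one : χ * changeLevel hq₀ (1 : DirichletCharacter ℂ q₀) = χ := by
      rw [map_one, mul_one]
    simpa only [h_one] using Finset.single_le_sum
      (f := fun ψ : DirichletCharacter ℂ q₀ =>
        ‖∑' n : ℤ, a n * (χ * changeLevel hq₀ ψ) ((n : ℤ) : ZMod q)‖ ^ 2)
      (fun ψ _ => by positivity) (Finset.mem_univ 1)

/-- Coset form of the `q`-van der Corput identity: squaring out the coset second moment
gives the shifted correlation sums, and, in particular, the single twisted sum is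
bounded by the coset average. -/
theorem coset_second_moment_identity (q q₀ : ℕ) (hq : 0 < q) (hq₀ : q₀ ∣ q)
    (hq₀pos : 0 < q₀) (χ : DirichletCharacter ℂ q) (a : ℤ → ℂ)
    (ha : (Function.support a).Finite) :
    ((∑ ψ : DirichletCharacter ℂ q₀,
        ‖∑' n : ℤ,
          a n * (χ * DirichletCharacter.changeLevel hq₀ ψ) ((n : ℤ) : ZMod q)‖ ^ 2 : ℝ) : ℂ)
      = (q₀.totient : ℂ) * ∑' h : ℤ, ∑' n : ℤ,
          a (n + h * q₀) * (starRingEnd ℂ) (a n) *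
            χ ((n + h * q₀ : ℤ) : ZMod q) * (starRingEnd ℂ) (χ ((n : ℤ) : ZMod q)) ∧
    ‖∑' n : ℤ, a n * χ ((n : ℤ) : ZMod q)‖ ^ 2 ≤
      ∑ ψ : DirichletCharacter ℂ q₀,
        ‖∑' n : ℤ,
          a n * (χ * DirichletCharacter.changeLevel hq₀ ψ) ((n : ℤ) : ZMod q)‖ ^ 2 :=
  coset_second_moment_identity_general q q₀ hq₀ hq₀pos χ a ha
end

section
/- For every ε > 0 there exists a constant C = C(ε) > 0 such that the following holds. Let q be an odd positive integer, q₀ a positive divisor of q, χ a primitive Dirichlet character of conductor q, and A ≥ 1 a real number. Define, for integers h, S(χ, h q₀, 0) = Σ_{α mod q} χ(α + h q₀) · conj(χ(α)). Then Σ_{1 ≤ |h| ≤ A} |S(χ, h q₀, 0)| ≤ C · q₀ · A · q^{ε}. -/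
open Finset
open scoped ArithmeticFunction.Moebius

/-!
Substituting `α = t⁻¹` turns `S(χ, a, 0)` into `∑_{t unit} χ(1 + a t)`. Detecting units by Möbius
inversion over `e ∣ gcd(t, q)` splits this into sums of `χ(1 + a t)` over the multiples `t` of `e`;
by primitivity such a sum vanishes unless `a e = 0` in `ZMod q`, and then it equals `q / e`. For
`a = h q₀` that happens for at most `2 A q₀ e / q` of the `h`, so each divisor `e` of `q`
contributes at most `2 A q₀`, and the divisor bound `τ(q) ≪_ε q^ε` finishes the proof.
-/

lemma natCast_add_one_le_mul_pow {y : ℝ} (hy : 1 < y) (a : ℕ) :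
    (a + 1 : ℝ) ≤ (1 + (y - 1)⁻¹) * y ^ a := by
  have hbern : 1 + a * (y - 1) ≤ y ^ a := by
    simpa using one_add_mul_le_pow (by linarith : (-2 : ℝ) ≤ y - 1) a
  have hinv : 0 < (y - 1)⁻¹ := inv_pos.mpr (by linarith)
  have hcancel : (y - 1)⁻¹ * (y - 1) = 1 := inv_mul_cancel₀ (by linarith)
  nlinarith [mul_nonneg (Nat.cast_nonneg (α := ℝ) a) (by linarith : (0 : ℝ) ≤ y - 1)]

lemma natCast_add_one_le_pow {y : ℝ} (hy : 2 ≤ y) (a : ℕ) : (a + 1 : ℝ) ≤ y ^ a := by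
  have hbern : 1 + a * (y - 1) ≤ y ^ a := by
    simpa using one_add_mul_le_pow (by linarith : (-2 : ℝ) ≤ y - 1) a
  nlinarith [Nat.cast_nonneg (α := ℝ) a]

lemma Nat.cast_rpow_eq_prod_primeFactors {n : ℕ} (hn : n ≠ 0) (ε : ℝ) :
    (n : ℝ) ^ ε = ∏ p ∈ n.primeFactors, ((p : ℝ) ^ ε) ^ n.factorization p := by
  conv_lhs => rw [Nat.prod_primeFactors_pow_factorization hn]
  push_cast
  rw [← Real.finsetProd_rpow _ _ fun p _ => by positivity]
  exact prod_congr rfl fun p _ => (Real.rpow_pow_comm (Nat.cast_nonneg p) ε _).symm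

theorem Nat.card_divisors_le_mul_rpow {ε : ℝ} (hε : 0 < ε) :
    ∃ C > 0, ∀ n : ℕ, n ≠ 0 → (#n.divisors : ℝ) ≤ C * (n : ℝ) ^ ε := by
  set B : ℝ := 1 + ((2 : ℝ) ^ ε - 1)⁻¹
  set N : ℕ := ⌈(2 : ℝ) ^ ε⁻¹⌉₊
  have h2ε : 1 < (2 : ℝ) ^ ε := Real.one_lt_rpow one_lt_two hε
  have hB : 1 ≤ B := le_add_of_nonneg_right (inv_nonneg.mpr (by linarith))
  refine ⟨B ^ N, by positivity, fun n hn => ?_⟩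
  -- Only the primes with `p ^ ε < 2`, of which there are at most `N`, need the constant `B`.
  have hfactor : ∀ p ∈ n.primeFactors, ((n.factorization p + 1 : ℕ) : ℝ) ≤
      (if (p : ℝ) ^ ε < 2 then B else 1) * ((p : ℝ) ^ ε) ^ n.factorization p := by
    intro p hp
    have hp2 : (2 : ℝ) ≤ p := by exact_mod_cast (Nat.prime_of_mem_primeFactors hp).two_le
    push_cast
    split_ifs with hsmall
    · have hpε : (2 : ℝ) ^ ε ≤ (p : ℝ) ^ ε := Real.rpow_le_rpow (by norm_num) hp2 hε.le
      refine (natCast_add_one_le_mul_pow (h2ε.trans_le hpε) _).trans ?_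
      gcongr
      exact add_le_add_right (inv_anti₀ (by linarith) (by linarith)) 1
    · rw [one_mul]
      exact natCast_add_one_le_pow (not_lt.mp hsmall) _
  have hsmall : #(n.primeFactors.filter fun p : ℕ => (p : ℝ) ^ ε < 2) ≤ N := by
    refine (card_le_card fun p hp => ?_).trans (card_range N).le
    rw [mem_filter] at hp
    rw [mem_range]
    by_contra! hNp
    have : (2 : ℝ) ≤ (p : ℝ) ^ ε := by
      calc (2 : ℝ) = ((2 : ℝ) ^ ε⁻¹) ^ ε := (Real.rpow_inv_rpow (by norm_num) hε.ne').symm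
        _ ≤ (p : ℝ) ^ ε := Real.rpow_le_rpow (by positivity)
            ((Nat.le_ceil _).trans (by exact_mod_cast hNp)) hε.le
    exact hp.2.not_ge this
  calc (#n.divisors : ℝ) = ∏ p ∈ n.primeFactors, ((n.factorization p + 1 : ℕ) : ℝ) := by
        rw [Nat.card_divisors hn]; push_cast; rfl
    _ ≤ ∏ p ∈ n.primeFactors,
          (if (p : ℝ) ^ ε < 2 then B else 1) * ((p : ℝ) ^ ε) ^ n.factorization p :=
        prod_le_prod (fun _ _ => by positivity) hfactor
    _ = B ^ #(n.primeFactors.filter fun p : ℕ => (p : ℝ) ^ ε < 2) * (n : ℝ) ^ ε := by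
        rw [prod_mul_distrib, prod_ite, prod_const, prod_const_one, mul_one,
          Nat.cast_rpow_eq_prod_primeFactors hn]
    _ ≤ B ^ N * (n : ℝ) ^ ε := by gcongr

namespace ZMod

variable {q : ℕ}

lemma dvd_val_iff_cast_eq_zero [NeZero q] {d : ℕ} (y : ZMod q) :
    d ∣ y.val ↔ (cast y : ZMod d) = 0 := by
  rw [cast_eq_val, natCast_eq_zero_iff]

lemma dvd_of_gcd_val_dvd_val [NeZero q] {b x : ZMod q} (h : Nat.gcd b.val q ∣ x.val) : b ∣ x := by
  obtain ⟨k, hk⟩ := h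
  have hbezout : ((Nat.gcd b.val q : ℤ) : ZMod q) = b * (Nat.gcdA b.val q : ZMod q) := by
    rw [Nat.gcd_eq_gcd_ab]; push_cast; simp
  refine ⟨Nat.gcdA b.val q * k, ?_⟩
  rw [← natCast_zmod_val x, hk]
  push_cast at hbezout ⊢
  rw [hbezout]; ring

lemma natCast_dvd_iff_dvd_val [NeZero q] {e : ℕ} (he : e ∣ q) (t : ZMod q) :
    (e : ZMod q) ∣ t ↔ e ∣ t.val := by
  refine ⟨?_, fun ⟨k, hk⟩ => ⟨k, by rw [← natCast_zmod_val t, hk, Nat.cast_mul]⟩⟩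
  rintro ⟨c, rfl⟩
  rw [dvd_val_iff_cast_eq_zero, ← castHom_apply (h := he), map_mul, map_natCast, natCast_self,
    zero_mul]

lemma card_filter_natCast_dvd [NeZero q] {e : ℕ} (he : e ∣ q) :
    #{t : ZMod q | (e : ZMod q) ∣ t} = q / e := by
  have hmem (t : ZMod q) : (e : ZMod q) ∣ t ↔ t ∈ AddSubgroup.zmultiples (e : ZMod q) := by
    rw [AddSubgroup.mem_zmultiples_iff]
    constructor
    · rintro ⟨c, rfl⟩
      exact ⟨c.val, by rw [natCast_zsmul, nsmul_eq_mul, natCast_zmod_val, mul_comm]⟩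
    · rintro ⟨k, rfl⟩
      exact ⟨k, by rw [zsmul_eq_mul, mul_comm]⟩
  rw [← Fintype.card_subtype, ← Nat.card_eq_fintype_card,
    Nat.card_congr (Equiv.subtypeEquivRight hmem), Nat.card_zmultiples,
    addOrderOf_coe _ (NeZero.ne q), Nat.gcd_eq_right he]

lemma sum_moebius_filter_natCast_dvd [NeZero q] {R : Type*} [Ring R] (t : ZMod q) :
    ∑ e ∈ q.divisors with ((e : ℕ) : ZMod q) ∣ t, (μ e : R) = if IsUnit t then 1 else 0 := by
  have hdiv : {e ∈ q.divisors | ((e : ℕ) : ZMod q) ∣ t} = (Nat.gcd t.val q).divisors := by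
    ext e
    simp only [mem_filter, Nat.mem_divisors, Nat.dvd_gcd_iff]
    constructor
    · rintro ⟨⟨heq, hq⟩, het⟩
      exact ⟨⟨(natCast_dvd_iff_dvd_val heq t).mp het, heq⟩, Nat.gcd_ne_zero_right hq⟩
    · rintro ⟨⟨het, heq⟩, -⟩
      exact ⟨⟨heq, NeZero.ne q⟩, (natCast_dvd_iff_dvd_val heq t).mpr het⟩
  have hunit : IsUnit t ↔ Nat.gcd t.val q = 1 := by
    conv_lhs => rw [← natCast_zmod_val t]
    exact isUnit_iff_coprime _ _
  simp only [hdiv, hunit]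
  have h := congr($(ArithmeticFunction.coe_moebius_mul_coe_zeta (R := R)) (Nat.gcd t.val q))
  rwa [ArithmeticFunction.coe_mul_zeta_apply, ArithmeticFunction.one_apply] at h

lemma sum_units_eq_sum_moebius_mul [NeZero q] {R : Type*} [CommRing R] (f : ZMod q → R) :
    ∑ u : (ZMod q)ˣ, f u = ∑ e ∈ q.divisors, (μ e : R) * ∑ t with (e : ZMod q) ∣ t, f t := by
  calc ∑ u : (ZMod q)ˣ, f u = ∑ t, (if IsUnit t then 1 else 0) * f t := by
        refine Fintype.sum_of_injective _ Units.val_injective _ _ (fun t ht => ?_) (fun u => ?_)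
        · rw [if_neg fun hu => ht ⟨hu.unit, rfl⟩, zero_mul]
        · rw [if_pos u.isUnit, one_mul]
    _ = ∑ t, ∑ e ∈ q.divisors, if (e : ZMod q) ∣ t then (μ e : R) * f t else 0 := by
        simp_rw [← sum_moebius_filter_natCast_dvd, sum_mul, sum_filter]
    _ = _ := by
        rw [sum_comm]
        simp_rw [mul_sum, sum_filter]

end ZMod

namespace DirichletCharacter

variable {q : ℕ} [NeZero q]

section IsDomain

variable {R : Type*} [CommRing R] {χ : DirichletCharacter R q}

lemma IsPrimitive.exists_unit_ne_one_dvd_sub_one (hχ : χ.IsPrimitive) {b : ZMod q}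
    (hb : b ≠ 0) : ∃ u : (ZMod q)ˣ, χ u ≠ 1 ∧ b ∣ (u : ZMod q) - 1 := by
  -- `b` divides every multiple of `gcd b.val q`, a proper divisor of the conductor `q`.
  set g := Nat.gcd b.val q
  have hgq : g ∣ q := Nat.gcd_dvd_right _ _
  have hg_lt : g < q :=
    (Nat.gcd_le_left _ (Nat.pos_of_ne_zero ((ZMod.val_ne_zero b).mpr hb))).trans_lt b.val_lt
  have hnot : ¬ χ.FactorsThrough g := fun h => by
    have : χ.conductor ≤ g := Nat.sInf_le h
    rw [hχ] at this
    omega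
  rw [factorsThrough_iff_ker_unitsMap hgq, SetLike.not_le_iff_exists] at hnot
  obtain ⟨u, hu_ker, hu_χ⟩ := hnot
  refine ⟨u, fun h => hu_χ (Units.ext (by simpa using h)), ZMod.dvd_of_gcd_val_dvd_val ?_⟩
  rw [ZMod.dvd_val_iff_cast_eq_zero, ← ZMod.castHom_apply (h := hgq), map_sub, map_one,
    ZMod.castHom_apply, ← ZMod.unitsMap_val hgq, hu_ker, Units.val_one, sub_self]

lemma IsPrimitive.sum_filter_dvd_one_add_mul_eq_zero [IsDomain R] (hχ : χ.IsPrimitive)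
    {a e : ZMod q} (hae : a * e ≠ 0) : ∑ t with e ∣ t, χ (1 + a * t) = 0 := by
  obtain ⟨u, hu, s, hs⟩ := hχ.exists_unit_ne_one_dvd_sub_one hae
  -- The bijection `t ↦ u t + e s` of the multiples of `e` multiplies each summand by `χ u`.
  refine eq_zero_of_mul_eq_self_left hu ?_
  rw [sum_filter, mul_sum]
  refine Fintype.sum_equiv ((Units.mulLeft u).trans (Equiv.addRight (e * s))) _ _ fun t => ?_
  simp only [Equiv.trans_apply, Units.mulLeft_apply, Equiv.coe_addRight]
  have hdvd : e ∣ ↑u * t + e * s ↔ e ∣ t := by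
    rw [dvd_add_left (dvd_mul_right e s), Units.dvd_mul_left]
  have hshift : 1 + a * (↑u * t + e * s) = ↑u * (1 + a * t) := by linear_combination -hs
  simp only [hdvd, hshift, map_mul]
  split_ifs <;> simp

end IsDomain

lemma sum_add_mul_conj_eq_sum_units (χ : DirichletCharacter ℂ q) (a : ZMod q) :
    ∑ α, χ (α + a) * starRingEnd ℂ (χ α) = ∑ u : (ZMod q)ˣ, χ (1 + a * u) := by
  have hunit (u : (ZMod q)ˣ) : χ (u + a) * starRingEnd ℂ (χ u) = χ (1 + a * ↑u⁻¹) := by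
    rw [starRingEnd_apply, MulChar.star_apply', MulChar.inv_apply, Ring.inverse_unit, ← map_mul,
      add_mul, Units.mul_inv, mul_comm]
  calc ∑ α, χ (α + a) * starRingEnd ℂ (χ α)
      = ∑ u : (ZMod q)ˣ, χ (u + a) * starRingEnd ℂ (χ u) :=
        (Fintype.sum_of_injective _ Units.val_injective _ _
          (fun α hα => by rw [χ.map_nonunit fun h => hα ⟨h.unit, rfl⟩, map_zero, mul_zero])
          fun _ => rfl).symm
    _ = ∑ u : (ZMod q)ˣ, χ (1 + a * u) := by
        simp_rw [hunit]
        exact Fintype.sum_equiv (Equiv.inv _) _ _ fun _ => rfl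

theorem IsPrimitive.norm_sum_add_mul_conj_le {χ : DirichletCharacter ℂ q} (hχ : χ.IsPrimitive)
    (a : ZMod q) :
    ‖∑ α, χ (α + a) * starRingEnd ℂ (χ α)‖ ≤
      ∑ e ∈ q.divisors, if a * e = 0 then (q : ℝ) / e else 0 := by
  rw [sum_add_mul_conj_eq_sum_units, ZMod.sum_units_eq_sum_moebius_mul fun t => χ (1 + a * t)]
  refine (norm_sum_le _ _).trans (sum_le_sum fun e he => ?_)
  split_ifs with hae
  · have hone : ∀ t ∈ ({t | (e : ZMod q) ∣ t} : Finset (ZMod q)), χ (1 + a * t) = 1 := by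
      rintro _ ht
      obtain ⟨c, rfl⟩ := (mem_filter.mp ht).2
      rw [← mul_assoc, hae, zero_mul, add_zero, map_one]
    have he0 : (e : ℝ) ≠ 0 := Nat.cast_ne_zero.mpr (Nat.pos_of_mem_divisors he).ne'
    rw [sum_congr rfl hone, sum_const, ZMod.card_filter_natCast_dvd (Nat.dvd_of_mem_divisors he),
      nsmul_one, norm_mul, Complex.norm_natCast, Nat.cast_div (Nat.dvd_of_mem_divisors he) he0]
    refine mul_le_of_le_one_left (by positivity) ?_
    rw [Complex.norm_intCast]
    exact_mod_cast ArithmeticFunction.abs_moebius_le_one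
  · rw [hχ.sum_filter_dvd_one_add_mul_eq_zero hae, mul_zero, norm_zero]

end DirichletCharacter

lemma card_filter_dvd_Icc_erase_zero_mul_le (M q : ℕ) :
    #{k ∈ (Icc (-M : ℤ) M).erase 0 | (q : ℤ) ∣ k} * q ≤ 2 * M := by
  set S := {n ∈ Ioc 0 M | q ∣ n}
  have hsub : {k ∈ (Icc (-M : ℤ) M).erase 0 | (q : ℤ) ∣ k} ⊆
      S.image (fun n : ℕ => (n : ℤ)) ∪ S.image (fun n : ℕ => -(n : ℤ)) := by
    intro k hk
    simp only [mem_filter, mem_erase, mem_Icc] at hk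
    obtain ⟨⟨hk0, hlo, hhi⟩, hdvd⟩ := hk
    have habs : k.natAbs ∈ S := by
      simp only [S, mem_filter, mem_Ioc, ← Int.natCast_dvd]
      exact ⟨⟨by omega, by omega⟩, hdvd⟩
    rcases Int.natAbs_eq k with h | h
    · exact mem_union_left _ (mem_image.mpr ⟨_, habs, h.symm⟩)
    · exact mem_union_right _ (mem_image.mpr ⟨_, habs, h.symm⟩)
  calc #{k ∈ (Icc (-M : ℤ) M).erase 0 | (q : ℤ) ∣ k} * q ≤ (#S + #S) * q := by
        gcongr
        exact (card_le_card hsub).trans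
          ((card_union_le _ _).trans (add_le_add card_image_le card_image_le))
    _ = 2 * (M / q * q) := by rw [Nat.Ioc_filter_dvd_card_eq_div]; ring
    _ ≤ 2 * M := by gcongr; exact Nat.div_mul_le_self M q

lemma card_filter_dvd_mul_Icc_erase_zero_mul_le (N c q : ℕ) (hc : c ≠ 0) :
    #{h ∈ (Icc (-N : ℤ) N).erase 0 | (q : ℤ) ∣ h * c} * q ≤ 2 * (N * c) := by
  refine le_trans (Nat.mul_le_mul_right q ?_) (card_filter_dvd_Icc_erase_zero_mul_le (N * c) q)
  have hc' : (0 : ℤ) < c := by omega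
  refine card_le_card_of_injOn (· * (c : ℤ)) (fun h hh => ?_)
    fun h _ h' _ hhh' => mul_right_cancel₀ hc'.ne' hhh'
  simp only [coe_filter, Set.mem_ofPred_eq, mem_erase, mem_Icc] at hh ⊢
  obtain ⟨⟨hh0, hlo, hhi⟩, hdvd⟩ := hh
  push_cast
  exact ⟨⟨mul_ne_zero hh0 hc'.ne', by nlinarith, by nlinarith⟩, hdvd⟩

lemma sum_Icc_erase_zero_ite_mul_eq_zero_le {q q₀ e : ℕ} (N : ℕ) (hq₀ : 0 < q₀) (he : e ≠ 0) :
    ∑ h ∈ (Icc (-N : ℤ) N).erase 0,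
        (if ((h * q₀ : ℤ) : ZMod q) * e = 0 then (q : ℝ) / e else 0) ≤ 2 * N * q₀ := by
  have hcond (h : ℤ) : ((h * q₀ : ℤ) : ZMod q) * e = 0 ↔ (q : ℤ) ∣ h * ↑(q₀ * e) := by
    rw [← ZMod.intCast_zmod_eq_zero_iff_dvd]
    push_cast
    ring_nf
  have hcount := card_filter_dvd_mul_Icc_erase_zero_mul_le N (q₀ * e) q (by positivity)
  rw [← sum_filter, sum_const, nsmul_eq_mul, filter_congr fun h _ => hcond h, ← mul_div_assoc,
    div_le_iff₀ (by positivity)]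
  exact_mod_cast hcount.trans_eq (by ring)

/-- Heath-Brown's bound for averages of shifted character sums at frequency zero
(Lemma 4.3, second bound). -/
theorem heath_brown_shifted_character_sums_zero_frequency :
    ∀ ε : ℝ, 0 < ε → ∃ C : ℝ, 0 < C ∧
      ∀ (q q₀ : ℕ) (hq : Odd q), q₀ ∣ q → 0 < q₀ →
      ∀ (χ : DirichletCharacter ℂ q), χ.IsPrimitive →
      ∀ A : ℝ, 1 ≤ A →
        haveI : NeZero q := ⟨hq.pos.ne'⟩
        (∑ h ∈ (Finset.Icc (-⌊A⌋) ⌊A⌋).erase 0,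
            ‖∑ α : ZMod q,
              χ (α + ((h * q₀ : ℤ) : ZMod q)) * (starRingEnd ℂ) (χ α)‖)
          ≤ C * (q₀ : ℝ) * A * (q : ℝ) ^ ε := by
  intro ε hε
  obtain ⟨C, hC, hτ⟩ := Nat.card_divisors_le_mul_rpow hε
  refine ⟨2 * C, by positivity, fun q q₀ hq _ hq₀ χ hχ A hA => ?_⟩
  have : NeZero q := ⟨hq.pos.ne'⟩
  have hA0 : 0 ≤ A := by linarith
  rw [← Int.natCast_floor_eq_floor hA0]
  calc ∑ h ∈ (Icc (-(⌊A⌋₊ : ℤ)) ⌊A⌋₊).erase 0,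
        ‖∑ α : ZMod q, χ (α + ((h * q₀ : ℤ) : ZMod q)) * starRingEnd ℂ (χ α)‖
      ≤ ∑ h ∈ (Icc (-(⌊A⌋₊ : ℤ)) ⌊A⌋₊).erase 0, ∑ e ∈ q.divisors,
          if ((h * q₀ : ℤ) : ZMod q) * e = 0 then (q : ℝ) / e else 0 :=
        sum_le_sum fun h _ => hχ.norm_sum_add_mul_conj_le _
    _ = ∑ e ∈ q.divisors, ∑ h ∈ (Icc (-(⌊A⌋₊ : ℤ)) ⌊A⌋₊).erase 0,
          if ((h * q₀ : ℤ) : ZMod q) * e = 0 then (q : ℝ) / e else 0 := sum_comm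
    _ ≤ ∑ e ∈ q.divisors, 2 * (⌊A⌋₊ : ℝ) * q₀ :=
        sum_le_sum fun e he =>
          sum_Icc_erase_zero_ite_mul_eq_zero_le _ hq₀ (Nat.pos_of_mem_divisors he).ne'
    _ = #q.divisors * (2 * (⌊A⌋₊ : ℝ) * q₀) := by rw [sum_const, nsmul_eq_mul]
    _ ≤ C * (q : ℝ) ^ ε * (2 * A * q₀) := by
        gcongr
        · exact hτ q (NeZero.ne q)
        · exact Nat.floor_le hA0
    _ = 2 * C * q₀ * A * (q : ℝ) ^ ε := by ring
end
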